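/- arXiv:2412.07645 — 8 statements merged into one kernel-verified Lean document; each statement's English description precedes it below -/
import Mathlib

section
/- Let Ω ⊆ ℝ^N be Lebesgue measurable with |Ω| < ∞, let φ > 1 and r < -N. Then the upper φ-shell Minkowski content of Ω at infinity is at most the upper Minkowski content of Ω at infinity, which in turn is at most (1 - φ^(N+r))^(-1) times the upper φ-shell Minkowski content. -/
open MeasureTheory Filter Set
open scoped ENNReal NNReal Topology

noncomputable section

/-- The `[a,b)`-shell centered at the origin in `ℝ^N`. -/
def shell (N : ℕ) (a b : ℝ) : Set (EuclideanSpace ℝ (Fin N)) :=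
  {x | a ≤ ‖x‖ ∧ ‖x‖ < b}

/-- The complement of the open ball `B_t(0)` in `ℝ^N`. -/
def farBall (N : ℕ) (t : ℝ) : Set (EuclideanSpace ℝ (Fin N)) :=
  {x | t ≤ ‖x‖}

/-- Upper φ-shell Minkowski content of `Ω` at infinity. -/
def upperShellContent (N : ℕ) (Ω : Set (EuclideanSpace ℝ (Fin N))) (φ r : ℝ) : ℝ≥0∞ :=
  Filter.limsup (fun t : ℝ =>
    volume (shell N t (φ * t) ∩ Ω) / ENNReal.ofReal (t ^ ((N : ℝ) + r))) Filter.atTop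

/-- Lower φ-shell Minkowski content of `Ω` at infinity. -/
def lowerShellContent (N : ℕ) (Ω : Set (EuclideanSpace ℝ (Fin N))) (φ r : ℝ) : ℝ≥0∞ :=
  Filter.liminf (fun t : ℝ =>
    volume (shell N t (φ * t) ∩ Ω) / ENNReal.ofReal (t ^ ((N : ℝ) + r))) Filter.atTop

/-- Upper Minkowski content of `Ω` at infinity. -/
def upperContent (N : ℕ) (Ω : Set (EuclideanSpace ℝ (Fin N))) (r : ℝ) : ℝ≥0∞ :=
  Filter.limsup (fun t : ℝ =>
    volume (farBall N t ∩ Ω) / ENNReal.ofReal (t ^ ((N : ℝ) + r))) Filter.atTop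

/-- Lower Minkowski content of `Ω` at infinity. -/
def lowerContent (N : ℕ) (Ω : Set (EuclideanSpace ℝ (Fin N))) (r : ℝ) : ℝ≥0∞ :=
  Filter.liminf (fun t : ℝ =>
    volume (farBall N t ∩ Ω) / ENNReal.ofReal (t ^ ((N : ℝ) + r))) Filter.atTop

/-- Upper φ-shell Minkowski dimension of `Ω` at infinity, as an extended real. -/
def upperShellDim (N : ℕ) (Ω : Set (EuclideanSpace ℝ (Fin N))) (φ : ℝ) : EReal :=
  sInf ((fun r : ℝ => (r : EReal)) '' {r : ℝ | upperShellContent N Ω φ r = 0})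

/-- Lower φ-shell Minkowski dimension of `Ω` at infinity, as an extended real. -/
def lowerShellDim (N : ℕ) (Ω : Set (EuclideanSpace ℝ (Fin N))) (φ : ℝ) : EReal :=
  sInf ((fun r : ℝ => (r : EReal)) '' {r : ℝ | lowerShellContent N Ω φ r = 0})

theorem upper_shell_content_le_upper_content_le
    (N : ℕ) (Ω : Set (EuclideanSpace ℝ (Fin N))) (hΩ : MeasurableSet Ω)
    (hfin : volume Ω < ⊤) (φ : ℝ) (hφ : 1 < φ) (r : ℝ) (hr : r < -(N : ℝ)) :
    upperShellContent N Ω φ r ≤ upperContent N Ω r ∧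
    upperContent N Ω r ≤
      ENNReal.ofReal (1 / (1 - φ ^ ((N : ℝ) + r))) * upperShellContent N Ω φ r := by
  have hφ0 : (0:ℝ) < φ := lt_trans one_pos hφ
  constructor
  · refine Filter.limsup_le_limsup ?_ (by isBoundedDefault) (by isBoundedDefault)
    filter_upwards with t
    gcongr
    exact fun x hx => hx.1
  · set s : ℝ := φ ^ ((N:ℝ) + r) with hs_def
    have hs0 : 0 < s := Real.rpow_pos_of_pos hφ0 _
    have hs1 : s < 1 := Real.rpow_lt_one_of_one_lt_of_neg hφ (by linarith)
    set K : ℝ≥0∞ := ENNReal.ofReal (1 / (1 - s)) with hK_def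
    have hK0 : K ≠ 0 := by
      rw [hK_def, Ne, ENNReal.ofReal_eq_zero, not_le]
      have h1s : (0:ℝ) < 1 - s := by linarith
      positivity
    have hKtop : K ≠ ⊤ := ENNReal.ofReal_ne_top
    set M := upperShellContent N Ω φ r with hM_def
    rcases eq_or_ne M ⊤ with hM | hM
    · rw [hM, ENNReal.mul_top hK0]; exact le_top
    have hKgeom : K = (1 - ENNReal.ofReal s)⁻¹ := by
      rw [hK_def, one_div, ← ENNReal.ofReal_one, ← ENNReal.ofReal_sub _ hs0.le,
        ENNReal.ofReal_inv_of_pos (by linarith)]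
    have hpow : ∀ k : ℕ, ((φ:ℝ) ^ k) ^ ((N:ℝ) + r) = s ^ k := by
      intro k
      rw [← Real.rpow_natCast φ k, ← Real.rpow_mul hφ0.le, mul_comm,
        Real.rpow_mul hφ0.le, Real.rpow_natCast]
    have key : ∀ c : ℝ≥0∞, M < c → upperContent N Ω r ≤ K * c := by
      intro c hc
      have hev : ∀ᶠ t : ℝ in atTop,
          volume (shell N t (φ * t) ∩ Ω) / ENNReal.ofReal (t ^ ((N : ℝ) + r)) < c :=
        Filter.eventually_lt_of_limsup_lt hc
      rw [Filter.eventually_atTop] at hev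
      obtain ⟨T, hT⟩ := hev
      apply Filter.limsup_le_of_le (by isBoundedDefault)
      filter_upwards [Filter.eventually_ge_atTop (max T 1)] with t ht
      have ht1 : (1:ℝ) ≤ t := le_trans (le_max_right _ _) ht
      have htT : T ≤ t := le_trans (le_max_left _ _) ht
      have ht0 : (0:ℝ) < t := lt_of_lt_of_le one_pos ht1
      have hX0 : (0:ℝ) < t ^ ((N:ℝ)+r) := Real.rpow_pos_of_pos ht0 _
      -- bound on each shell
      have hshell : ∀ k : ℕ, volume (shell N (φ^k * t) (φ^(k+1) * t) ∩ Ω)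
          ≤ c * (ENNReal.ofReal s ^ k * ENNReal.ofReal (t ^ ((N:ℝ)+r))) := by
        intro k
        have hk1 : (1:ℝ) ≤ φ ^ k := one_le_pow₀ hφ.le
        have hkt0 : (0:ℝ) < φ ^ k * t := by positivity
        have hst : T ≤ φ ^ k * t := htT.trans (le_mul_of_one_le_left ht0.le hk1)
        have hb := (hT _ hst).le
        have hb0 : ENNReal.ofReal ((φ ^ k * t) ^ ((N:ℝ)+r)) ≠ 0 := by
          rw [Ne, ENNReal.ofReal_eq_zero, not_le]
          exact Real.rpow_pos_of_pos hkt0 _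
        rw [ENNReal.div_le_iff_le_mul (Or.inl hb0) (Or.inl ENNReal.ofReal_ne_top)] at hb
        have heq : shell N (φ^k * t) (φ^(k+1) * t) = shell N (φ^k * t) (φ * (φ^k * t)) := by
          congr 1
          ring
        have heq2 : (φ ^ k * t) ^ ((N:ℝ)+r) = s ^ k * t ^ ((N:ℝ)+r) := by
          rw [Real.mul_rpow (by positivity) ht0.le, hpow k]
        calc volume (shell N (φ^k * t) (φ^(k+1) * t) ∩ Ω)
            = volume (shell N (φ^k * t) (φ * (φ^k * t)) ∩ Ω) := by rw [heq]
          _ ≤ c * ENNReal.ofReal ((φ ^ k * t) ^ ((N:ℝ)+r)) := hb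
          _ = c * (ENNReal.ofReal s ^ k * ENNReal.ofReal (t ^ ((N:ℝ)+r))) := by
              rw [heq2, ENNReal.ofReal_mul (by positivity), ENNReal.ofReal_pow hs0.le]
      -- decomposition of the far ball into shells
      have hsub : farBall N t ∩ Ω ⊆ ⋃ k : ℕ, shell N (φ^k * t) (φ^(k+1) * t) ∩ Ω := by
        rintro x ⟨hx, hxΩ⟩
        have hx' : t ≤ ‖x‖ := hx
        have hex : ∃ n : ℕ, ‖x‖ < φ ^ n * t := by
          obtain ⟨n, hn⟩ := pow_unbounded_of_one_lt (‖x‖ / t) hφ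
          exact ⟨n, by rwa [div_lt_iff₀ ht0] at hn, ⟩
        classical
        have hn0 : Nat.find hex ≠ 0 := by
          intro h
          have hsp := Nat.find_spec hex
          rw [h, pow_zero, one_mul] at hsp
          exact absurd hx' (not_le.2 hsp)
        obtain ⟨k, hk⟩ := Nat.exists_eq_succ_of_ne_zero hn0
        refine mem_iUnion.2 ⟨k, ⟨?_, ?_⟩, hxΩ⟩
        · exact not_lt.1 (Nat.find_min hex (by omega))
        · have hsp := Nat.find_spec hex
          rw [hk] at hsp
          exact hsp
      have hgeom : ∑' k : ℕ, ENNReal.ofReal s ^ k = K := by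
        rw [ENNReal.tsum_geometric, hKgeom]
      have hchain : volume (farBall N t ∩ Ω)
          ≤ K * c * ENNReal.ofReal (t ^ ((N:ℝ)+r)) :=
        calc volume (farBall N t ∩ Ω)
            ≤ volume (⋃ k : ℕ, shell N (φ^k * t) (φ^(k+1) * t) ∩ Ω) := measure_mono hsub
          _ ≤ ∑' k : ℕ, volume (shell N (φ^k * t) (φ^(k+1) * t) ∩ Ω) := measure_iUnion_le _
          _ ≤ ∑' k : ℕ, c * (ENNReal.ofReal s ^ k * ENNReal.ofReal (t ^ ((N:ℝ)+r))) :=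
              ENNReal.tsum_le_tsum hshell
          _ = c * ENNReal.ofReal (t ^ ((N:ℝ)+r)) * ∑' k : ℕ, ENNReal.ofReal s ^ k := by
              rw [ENNReal.tsum_mul_left, ENNReal.tsum_mul_right]
              ring
          _ = K * c * ENNReal.ofReal (t ^ ((N:ℝ)+r)) := by
              rw [hgeom]; ring
      have hXne : ENNReal.ofReal (t ^ ((N:ℝ)+r)) ≠ 0 := by
        rw [Ne, ENNReal.ofReal_eq_zero, not_le]; exact hX0
      rw [ENNReal.div_le_iff_le_mul (Or.inl hXne) (Or.inl ENNReal.ofReal_ne_top)]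
      exact hchain
    by_contra hcon
    push_neg at hcon
    set U := upperContent N Ω r with hU_def
    have hMU : M < U / K := by
      rw [ENNReal.lt_div_iff_mul_lt (Or.inl hK0) (Or.inl hKtop), mul_comm]
      exact hcon
    obtain ⟨c, hc1, hc2⟩ := exists_between hMU
    have h1 := key c hc1
    have h2 : K * c < U := by
      rw [mul_comm]
      exact (ENNReal.lt_div_iff_mul_lt (Or.inl hK0) (Or.inl hKtop)).1 hc2
    exact absurd (lt_of_le_of_lt h1 h2) (lt_irrefl _)
end
end

section
/- Let Ω ⊆ ℝ^N be Lebesgue measurable with |Ω| < ∞, let φ > 1 and r < -N. Then (1 - φ^(N+r))^(-1) times the lower φ-shell Minkowski content of Ω at infinity is at most the lower Minkowski content of Ω at infinity. -/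
open MeasureTheory Filter Set
open scoped ENNReal NNReal Topology

noncomputable section

/-!
Split `B_t(0)ᶜ` into the shells `B_{φ^k t, φ^{k+1} t}(0)`, `k ∈ ℕ`. After rescaling `t ↦ φ^k t`,
the `k`-th shell contributes at least `(φ^(N+r))^k` times the lower shell content to the lower
content, and summing the geometric series gives the factor `(1 - φ^(N+r))⁻¹`.
-/

namespace ENNReal

variable {α : Type*} {l : Filter α}

theorem le_liminf_add (u v : α → ℝ≥0∞) : liminf u l + liminf v l ≤ liminf (u + v) l := by
  rcases eq_or_ne (liminf u l) 0 with hu | hu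
  · rw [hu, zero_add]
    exact liminf_le_liminf (.of_forall fun x => le_add_self)
  rcases eq_or_ne (liminf v l) 0 with hv | hv
  · rw [hv, add_zero]
    exact liminf_le_liminf (.of_forall fun x => le_self_add)
  refine (le_liminf_iff).2 fun c hc => ?_
  obtain ⟨a, ha, b, hb, hcab⟩ := exists_lt_add_of_lt_add hc hu hv
  filter_upwards [eventually_lt_of_lt_liminf ha, eventually_lt_of_lt_liminf hb] with x hx hy
  exact hcab.trans (ENNReal.add_lt_add hx hy)

theorem le_liminf_finset_sum {ι : Type*} (s : Finset ι) (u : ι → α → ℝ≥0∞) :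
    ∑ i ∈ s, liminf (u i) l ≤ liminf (fun x => ∑ i ∈ s, u i x) l := by
  classical
  induction s using Finset.induction_on with
  | empty => simp
  | insert i s hi ih =>
    simp only [Finset.sum_insert hi]
    exact (add_le_add le_rfl ih).trans (le_liminf_add _ _)

end ENNReal

section Shells

variable {N : ℕ}

theorem measurableSet_shell (a b : ℝ) : MeasurableSet (shell N a b) :=
  measurable_norm measurableSet_Ico

theorem shell_self (a : ℝ) : shell N a a = ∅ :=
  eq_empty_of_forall_notMem fun _ hx => hx.1.not_gt hx.2

theorem shell_subset_farBall (a b : ℝ) : shell N a b ⊆ farBall N a :=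
  fun _ hx => hx.1

theorem disjoint_shell_shell (a b c : ℝ) : Disjoint (shell N a b) (shell N b c) :=
  disjoint_left.2 fun _ hx hx' => (hx.2.trans_le hx'.1).false

theorem shell_union_shell {a b c : ℝ} (hab : a ≤ b) (hbc : b ≤ c) :
    shell N a b ∪ shell N b c = shell N a c := by
  ext x
  simp only [shell, mem_union, mem_ofPred_eq]
  constructor
  · rintro (⟨h₁, h₂⟩ | ⟨h₁, h₂⟩) <;> constructor <;> linarith
  · rintro ⟨h₁, h₂⟩
    by_cases h : ‖x‖ < b
    exacts [Or.inl ⟨h₁, h⟩, Or.inr ⟨not_lt.1 h, h₂⟩]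

theorem sum_measure_shell_geometric (μ : Measure (EuclideanSpace ℝ (Fin N))) {φ t : ℝ}
    (hφ : 1 ≤ φ) (ht : 0 ≤ t) (n : ℕ) :
    ∑ k ∈ Finset.range n, μ (shell N (φ ^ k * t) (φ ^ (k + 1) * t)) =
      μ (shell N t (φ ^ n * t)) := by
  induction n with
  | zero => simp [shell_self]
  | succ n ih =>
    have hmono : t ≤ φ ^ n * t := le_mul_of_one_le_left ht (one_le_pow₀ hφ)
    have hstep : φ ^ n * t ≤ φ ^ (n + 1) * t :=
      mul_le_mul_of_nonneg_right (pow_le_pow_right₀ hφ n.le_succ) ht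
    rw [Finset.sum_range_succ, ih, ← measure_union (disjoint_shell_shell _ _ _)
      (measurableSet_shell _ _), shell_union_shell hmono hstep]

end Shells

theorem ofReal_rpow_pow_mul {φ t : ℝ} (hφ : 0 < φ) (ht : 0 ≤ t) (p : ℝ) (k : ℕ) :
    ENNReal.ofReal ((φ ^ k * t) ^ p) = ENNReal.ofReal (φ ^ p) ^ k * ENNReal.ofReal (t ^ p) := by
  rw [Real.mul_rpow (by positivity) ht, ← Real.rpow_pow_comm hφ.le,
    ENNReal.ofReal_mul (by positivity), ENNReal.ofReal_pow (by positivity)]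

theorem geometric_sum_mul_lowerShellContent_le {N : ℕ} (Ω : Set (EuclideanSpace ℝ (Fin N)))
    {φ : ℝ} (hφ : 1 < φ) (r : ℝ) (n : ℕ) :
    ∑ k ∈ Finset.range n, ENNReal.ofReal (φ ^ ((N : ℝ) + r)) ^ k * lowerShellContent N Ω φ r ≤
      lowerContent N Ω r := by
  set p : ℝ := (N : ℝ) + r
  set d := ENNReal.ofReal (φ ^ p)
  -- `volume.restrict Ω` is additive on the (measurable) shells whether or not `Ω` is measurable
  set μ := volume.restrict Ω
  have hφ₀ : 0 < φ := one_pos.trans hφ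
  have hd₀ : d ≠ 0 := ENNReal.ofReal_pos.2 (Real.rpow_pos_of_pos hφ₀ p) |>.ne'
  have hμ (a b : ℝ) : volume (shell N a b ∩ Ω) = μ (shell N a b) :=
    (Measure.restrict_apply (measurableSet_shell a b)).symm
  let f (t : ℝ) := volume (shell N t (φ * t) ∩ Ω) / ENNReal.ofReal (t ^ p)
  have hrescale (t : ℝ) (ht : 0 < t) (k : ℕ) : d ^ k * f (φ ^ k * t) =
      μ (shell N (φ ^ k * t) (φ ^ (k + 1) * t)) / ENNReal.ofReal (t ^ p) := by
    simp only [f, ofReal_rpow_pow_mul hφ₀ ht.le, ← mul_assoc, ← pow_succ', hμ, ← mul_div_assoc]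
    exact ENNReal.mul_div_mul_left _ _ (pow_ne_zero k hd₀)
      (ENNReal.pow_ne_top ENNReal.ofReal_ne_top)
  calc ∑ k ∈ Finset.range n, d ^ k * lowerShellContent N Ω φ r
      ≤ ∑ k ∈ Finset.range n, liminf (fun t => d ^ k * f (φ ^ k * t)) atTop := by
        refine Finset.sum_le_sum fun k _ => ?_
        rw [ENNReal.liminf_const_mul_of_ne_top (ENNReal.pow_ne_top ENNReal.ofReal_ne_top)]
        exact mul_le_mul_right
          ((tendsto_id.const_mul_atTop (pow_pos hφ₀ k)).liminf_le_liminf_comp) _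
    _ ≤ liminf (fun t => ∑ k ∈ Finset.range n, d ^ k * f (φ ^ k * t)) atTop :=
        ENNReal.le_liminf_finset_sum _ _
    _ ≤ lowerContent N Ω r := by
        refine liminf_le_liminf ?_
        filter_upwards [eventually_gt_atTop 0] with t ht
        simp only [hrescale t ht, div_eq_mul_inv, ← Finset.sum_mul]
        rw [sum_measure_shell_geometric μ hφ.le ht.le, ← hμ]
        gcongr ?_ * _
        exact measure_mono (inter_subset_inter_left _ (shell_subset_farBall _ _))

theorem ofReal_one_div_one_sub_eq_tsum_geometric {c : ℝ} (hc₀ : 0 ≤ c) (hc₁ : c < 1) :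
    ENNReal.ofReal (1 / (1 - c)) = ∑' k : ℕ, ENNReal.ofReal c ^ k := by
  rw [ENNReal.tsum_geometric, one_div, ENNReal.ofReal_inv_of_pos (by linarith),
    ENNReal.ofReal_sub 1 hc₀, ENNReal.ofReal_one]

theorem lower_shell_content_le_lower_content_general
    (N : ℕ) (Ω : Set (EuclideanSpace ℝ (Fin N)))
    (φ : ℝ) (hφ : 1 < φ) (r : ℝ) (hr : r < -(N : ℝ)) :
    ENNReal.ofReal (1 / (1 - φ ^ ((N : ℝ) + r))) * lowerShellContent N Ω φ r ≤
      lowerContent N Ω r := by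
  have hφ₀ : 0 < φ := one_pos.trans hφ
  rw [ofReal_one_div_one_sub_eq_tsum_geometric (Real.rpow_nonneg hφ₀.le _)
    (Real.rpow_lt_one_of_one_lt_of_neg hφ (by linarith)), ← ENNReal.tsum_mul_right]
  exact ENNReal.tsum_le_of_sum_range_le (geometric_sum_mul_lowerShellContent_le Ω hφ r)

theorem lower_shell_content_le_lower_content
    (N : ℕ) (Ω : Set (EuclideanSpace ℝ (Fin N))) (hΩ : MeasurableSet Ω)
    (hfin : volume Ω < ⊤) (φ : ℝ) (hφ : 1 < φ) (r : ℝ) (hr : r < -(N : ℝ)) :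
    ENNReal.ofReal (1 / (1 - φ ^ ((N : ℝ) + r))) * lowerShellContent N Ω φ r ≤
      lowerContent N Ω r :=
  lower_shell_content_le_lower_content_general N Ω φ hφ r hr
end
end

section
/- Let Ω := {(x,y) ∈ ℝ² : x > 1, 0 < y < 1/x}. Then Ω has infinite Lebesgue measure, and for every φ > 1 the φ-shell Minkowski dimension of Ω at infinity exists and equals -2, with φ-shell Minkowski content M_φ^{-2}(∞,Ω) = log φ. -/
open MeasureTheory Filter Set
open scoped ENNReal NNReal Topology

noncomputable section

/-!
For `t > 1` the graph `y = 1/x` over `x ≥ t` lies within `1/t` of the `x`-axis, so the part of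
`Ω` in the shell `t ≤ ‖x‖ < φt` contains the strip `{t ≤ x < φt - 1/t, 0 < y < 1/x}` and is
contained in `{t - 1/t ≤ x < φt, 0 < y < 1/x}`. A strip `{a ≤ x < b, 0 < y < 1/x}` has area
`log (b / a)`, and both ratios tend to `φ`, so the shell volumes tend to `log φ ∈ (0, ∞)`.
Dividing by `t ^ (2 + r)` therefore gives the limit `∞`, `log φ` or `0` according as `r < -2`,
`r = -2` or `r > -2`, which places both shell dimensions at `-2`.
-/

open Real

section ShellDimension

variable {N : ℕ} {Ω : Set (EuclideanSpace ℝ (Fin N))} {φ : ℝ} {c : ℝ≥0∞}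

lemma exists_tendsto_ofReal_rpow_atTop (s : ℝ) :
    ∃ d : ℝ≥0∞, Tendsto (fun t : ℝ => ENNReal.ofReal (t ^ s)) atTop (𝓝 d) ∧ (d = ∞ ↔ 0 < s) := by
  rcases lt_trichotomy s 0 with hs | rfl | hs
  · refine ⟨0, ?_, by simp [hs.le]⟩
    rw [← ENNReal.ofReal_zero]
    exact ENNReal.tendsto_ofReal (by simpa using tendsto_rpow_neg_atTop (neg_pos.2 hs))
  · exact ⟨1, by simp, by simp⟩
  · exact ⟨∞, ENNReal.tendsto_ofReal_atTop.comp (tendsto_rpow_atTop hs), by simp [hs]⟩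

lemma exists_tendsto_div_ofReal_rpow {f : ℝ → ℝ≥0∞} (hf : Tendsto f atTop (𝓝 c))
    (hc₀ : c ≠ 0) (hc : c ≠ ∞) (s : ℝ) :
    ∃ L : ℝ≥0∞, Tendsto (fun t : ℝ => f t / ENNReal.ofReal (t ^ s)) atTop (𝓝 L) ∧
      (L = 0 ↔ 0 < s) := by
  obtain ⟨d, hd, hd_top⟩ := exists_tendsto_ofReal_rpow_atTop s
  exact ⟨c / d, ENNReal.Tendsto.div hf (.inl hc₀) hd (.inr hc),
    by simp [ENNReal.div_eq_zero_iff, hc₀, hd_top]⟩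

lemma upperShellContent_eq_zero_iff
    (h : Tendsto (fun t : ℝ => volume (shell N t (φ * t) ∩ Ω)) atTop (𝓝 c))
    (hc₀ : c ≠ 0) (hc : c ≠ ∞) (r : ℝ) :
    upperShellContent N Ω φ r = 0 ↔ -(N : ℝ) < r := by
  obtain ⟨L, hL, hL₀⟩ := exists_tendsto_div_ofReal_rpow h hc₀ hc (N + r)
  rw [upperShellContent, hL.limsup_eq, hL₀, neg_lt_iff_pos_add']

lemma lowerShellContent_eq_zero_iff
    (h : Tendsto (fun t : ℝ => volume (shell N t (φ * t) ∩ Ω)) atTop (𝓝 c))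
    (hc₀ : c ≠ 0) (hc : c ≠ ∞) (r : ℝ) :
    lowerShellContent N Ω φ r = 0 ↔ -(N : ℝ) < r := by
  obtain ⟨L, hL, hL₀⟩ := exists_tendsto_div_ofReal_rpow h hc₀ hc (N + r)
  rw [lowerShellContent, hL.liminf_eq, hL₀, neg_lt_iff_pos_add']

lemma EReal.sInf_image_coe_Ioi (a : ℝ) : sInf (Real.toEReal '' Ioi a) = a := by
  rw [EReal.image_coe_Ioi, csInf_Ioo (EReal.coe_lt_top a)]

lemma upperShellDim_eq_neg_of_tendsto
    (h : Tendsto (fun t : ℝ => volume (shell N t (φ * t) ∩ Ω)) atTop (𝓝 c))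
    (hc₀ : c ≠ 0) (hc : c ≠ ∞) :
    upperShellDim N Ω φ = ((-N : ℝ) : EReal) := by
  have : {r : ℝ | upperShellContent N Ω φ r = 0} = Ioi (-(N : ℝ)) :=
    Set.ext (upperShellContent_eq_zero_iff h hc₀ hc)
  rw [upperShellDim, this, EReal.sInf_image_coe_Ioi]

lemma lowerShellDim_eq_neg_of_tendsto
    (h : Tendsto (fun t : ℝ => volume (shell N t (φ * t) ∩ Ω)) atTop (𝓝 c))
    (hc₀ : c ≠ 0) (hc : c ≠ ∞) :
    lowerShellDim N Ω φ = ((-N : ℝ) : EReal) := by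
  have : {r : ℝ | lowerShellContent N Ω φ r = 0} = Ioi (-(N : ℝ)) :=
    Set.ext (lowerShellContent_eq_zero_iff h hc₀ hc)
  rw [lowerShellDim, this, EReal.sInf_image_coe_Ioi]

end ShellDimension

def hyperbolaDomain : Set (EuclideanSpace ℝ (Fin 2)) :=
  {x | 1 < x 0 ∧ 0 < x 1 ∧ x 1 < (x 0)⁻¹}

def hyperbolaStrip (a b : ℝ) : Set (EuclideanSpace ℝ (Fin 2)) :=
  {x | a ≤ x 0 ∧ x 0 < b ∧ 0 < x 1 ∧ x 1 < (x 0)⁻¹}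

lemma EuclideanSpace.norm_sq_fin_two (x : EuclideanSpace ℝ (Fin 2)) :
    ‖x‖ ^ 2 = x 0 ^ 2 + x 1 ^ 2 := by
  rw [EuclideanSpace.real_norm_sq_eq, Fin.sum_univ_two]

lemma volume_hyperbolaStrip {a b : ℝ} (ha : 0 < a) (hab : a ≤ b) :
    volume (hyperbolaStrip a b) = ENNReal.ofReal (log (b / a)) := by
  let e : EuclideanSpace ℝ (Fin 2) → ℝ × ℝ := fun x =>
    MeasurableEquiv.finTwoArrow ((MeasurableEquiv.toLp 2 (Fin 2 → ℝ)).symm x)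
  have he : MeasurePreserving e volume volume :=
    (volume_preserving_finTwoArrow ℝ).comp
      (EuclideanSpace.volume_preserving_symm_measurableEquiv_toLp (Fin 2))
  have hstrip : hyperbolaStrip a b = e ⁻¹' regionBetween (fun _ => 0) Inv.inv (Ico a b) := by
    ext x
    exact and_assoc.symm
  have hpos : ∀ x ∈ Icc a b, 0 < x := fun x hx => ha.trans_le hx.1
  have hinv : IntegrableOn Inv.inv (Ico a b) :=
    ((continuousOn_inv₀.mono fun x hx => (hpos x hx).ne').integrableOn_Icc).mono_set
      Ico_subset_Icc_self
  rw [hstrip, he.measure_preimage (measurableSet_regionBetween measurable_const measurable_inv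
    measurableSet_Ico).nullMeasurableSet, Measure.volume_eq_prod,
    volume_regionBetween_eq_integral (integrableOn_const measure_Ico_lt_top.ne) hinv
      measurableSet_Ico fun x hx => by
        simpa using (inv_pos.2 (hpos x (Ico_subset_Icc_self hx))).le]
  simp only [Pi.sub_apply, sub_zero]
  rw [setIntegral_congr_set Ico_ae_eq_Ioc, ← intervalIntegral.integral_of_le hab,
    integral_inv_of_pos ha (ha.trans_le hab)]

lemma hyperbolaStrip_subset_shell_inter {φ t : ℝ} (hφ : 1 ≤ φ) (ht : 1 < t) :
    hyperbolaStrip t ((φ - (t ^ 2)⁻¹) * t) ⊆ shell 2 t (φ * t) ∩ hyperbolaDomain := by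
  rintro x ⟨hx₀, hxb, hx₁, hx₁'⟩
  have hn := EuclideanSpace.norm_sq_fin_two x
  have ht₀ : 0 < t := one_pos.trans ht
  have htu : t * t⁻¹ = 1 := mul_inv_cancel₀ ht₀.ne'
  have hu : t⁻¹ < 1 := inv_lt_one_of_one_lt₀ ht
  have hb : (φ - (t ^ 2)⁻¹) * t = φ * t - t⁻¹ := by field_simp
  have hx₁u : x 1 < t⁻¹ := hx₁'.trans_le (inv_anti₀ ht₀ hx₀)
  have hsq : x 0 ^ 2 + x 1 ^ 2 < (φ * t) ^ 2 := by
    nlinarith [mul_pos (inv_pos.2 ht₀) (inv_pos.2 ht₀)]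
  refine ⟨⟨?_, ?_⟩, ht.trans_le hx₀, hx₁, hx₁'⟩
  · nlinarith [norm_nonneg x]
  · nlinarith [norm_nonneg x]

lemma shell_inter_subset_hyperbolaStrip {φ t : ℝ} (ht : 1 ≤ t) :
    shell 2 t (φ * t) ∩ hyperbolaDomain ⊆ hyperbolaStrip ((1 - (t ^ 2)⁻¹) * t) (φ * t) := by
  rintro x ⟨⟨hxt, hxφ⟩, hx₀, hx₁, hx₁'⟩
  have hn := EuclideanSpace.norm_sq_fin_two x
  have ht₀ : 0 < t := one_pos.trans_le ht
  have htu : t * t⁻¹ = 1 := mul_inv_cancel₀ ht₀.ne'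
  have hu : t⁻¹ ≤ 1 := inv_le_one_of_one_le₀ ht
  have ha : (1 - (t ^ 2)⁻¹) * t = t - t⁻¹ := by field_simp
  have hx₁1 : x 1 < 1 := hx₁'.trans (inv_lt_one_of_one_lt₀ hx₀)
  refine ⟨?_, ?_, hx₁, hx₁'⟩
  · nlinarith [norm_nonneg x, inv_pos.2 ht₀]
  · nlinarith [norm_nonneg x]

lemma tendsto_volume_shell_inter_hyperbolaDomain {φ : ℝ} (hφ : 1 < φ) :
    Tendsto (fun t : ℝ => volume (shell 2 t (φ * t) ∩ hyperbolaDomain)) atTop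
      (𝓝 (ENNReal.ofReal (log φ))) := by
  have hu : Tendsto (fun t : ℝ => (t ^ 2)⁻¹) atTop (𝓝 0) :=
    tendsto_inv_atTop_zero.comp (tendsto_pow_atTop two_ne_zero)
  have hlower : Tendsto (fun t : ℝ => ENNReal.ofReal (log (φ - (t ^ 2)⁻¹))) atTop
      (𝓝 (ENNReal.ofReal (log φ))) := by
    refine ENNReal.tendsto_ofReal (Tendsto.log ?_ (by positivity))
    simpa using hu.const_sub φ
  have hupper : Tendsto (fun t : ℝ => ENNReal.ofReal (log (φ / (1 - (t ^ 2)⁻¹)))) atTop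
      (𝓝 (ENNReal.ofReal (log φ))) := by
    refine ENNReal.tendsto_ofReal (Tendsto.log ?_ (by positivity))
    have h₁ : Tendsto (fun t : ℝ => 1 - (t ^ 2)⁻¹) atTop (𝓝 1) := by simpa using hu.const_sub 1
    have h₂ : Tendsto (fun t : ℝ => φ / (1 - (t ^ 2)⁻¹)) atTop (𝓝 (φ / 1)) :=
      tendsto_const_nhds.div h₁ one_ne_zero
    rwa [div_one] at h₂
  have hsmall : ∀ᶠ t : ℝ in atTop, (t ^ 2)⁻¹ < φ - 1 :=
    hu.eventually (gt_mem_nhds (sub_pos.2 hφ))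
  refine tendsto_of_tendsto_of_tendsto_of_le_of_le' hlower hupper ?_ ?_
  all_goals filter_upwards [eventually_gt_atTop 1, hsmall] with t ht ht'
  · have ht₀ : 0 < t := one_pos.trans ht
    calc ENNReal.ofReal (log (φ - (t ^ 2)⁻¹))
        = volume (hyperbolaStrip t ((φ - (t ^ 2)⁻¹) * t)) := by
          rw [volume_hyperbolaStrip ht₀ (le_mul_of_one_le_left ht₀.le (by linarith)),
            mul_div_cancel_right₀ _ ht₀.ne']
      _ ≤ _ := measure_mono (hyperbolaStrip_subset_shell_inter hφ.le ht)
  · have ht₀ : 0 < t := one_pos.trans ht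
    have hu₁ : (t ^ 2)⁻¹ < 1 := inv_lt_one_of_one_lt₀ (one_lt_pow₀ ht two_ne_zero)
    have hu₀ : 0 < (t ^ 2)⁻¹ := by positivity
    calc volume (shell 2 t (φ * t) ∩ hyperbolaDomain)
        ≤ volume (hyperbolaStrip ((1 - (t ^ 2)⁻¹) * t) (φ * t)) :=
          measure_mono (shell_inter_subset_hyperbolaStrip ht.le)
      _ = ENNReal.ofReal (log (φ / (1 - (t ^ 2)⁻¹))) := by
          rw [volume_hyperbolaStrip (mul_pos (by linarith) ht₀)
            (mul_le_mul_of_nonneg_right (by linarith) ht₀.le), mul_div_mul_right _ _ ht₀.ne']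

lemma volume_hyperbolaDomain : volume hyperbolaDomain = ∞ := by
  refine ENNReal.eq_top_of_forall_nnreal_le fun n => ?_
  have hsub : hyperbolaStrip 2 (2 * exp n) ⊆ hyperbolaDomain :=
    fun x hx => ⟨by linarith [hx.1], hx.2.2⟩
  calc (n : ℝ≥0∞) = volume (hyperbolaStrip 2 (2 * exp n)) := by
        rw [volume_hyperbolaStrip (b := 2 * exp n) two_pos
            (le_mul_of_one_le_right two_pos.le (one_le_exp n.2)),
          mul_div_cancel_left₀ _ two_ne_zero, log_exp, ENNReal.ofReal_coe_nnreal]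
    _ ≤ volume hyperbolaDomain := measure_mono hsub

theorem hyperbola_domain_shell_dim (φ : ℝ) (hφ : 1 < φ) :
    volume {x : EuclideanSpace ℝ (Fin 2) | 1 < x 0 ∧ 0 < x 1 ∧ x 1 < (x 0)⁻¹} = ⊤ ∧
    upperShellDim 2 {x : EuclideanSpace ℝ (Fin 2) | 1 < x 0 ∧ 0 < x 1 ∧ x 1 < (x 0)⁻¹} φ
      = ((-2 : ℝ) : EReal) ∧
    lowerShellDim 2 {x : EuclideanSpace ℝ (Fin 2) | 1 < x 0 ∧ 0 < x 1 ∧ x 1 < (x 0)⁻¹} φ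
      = ((-2 : ℝ) : EReal) ∧
    Filter.Tendsto (fun t : ℝ =>
        volume (shell 2 t (φ * t) ∩
            {x : EuclideanSpace ℝ (Fin 2) | 1 < x 0 ∧ 0 < x 1 ∧ x 1 < (x 0)⁻¹}) /
          ENNReal.ofReal (t ^ ((2 : ℝ) + (-2 : ℝ)))) Filter.atTop
      (nhds (ENNReal.ofReal (Real.log φ))) := by
  have hlim := tendsto_volume_shell_inter_hyperbolaDomain hφ
  have hc₀ : ENNReal.ofReal (log φ) ≠ 0 := by simpa using log_pos hφ
  refine ⟨volume_hyperbolaDomain, ?_, ?_, ?_⟩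
  · exact (upperShellDim_eq_neg_of_tendsto hlim hc₀ ENNReal.ofReal_ne_top).trans (by norm_num)
  · exact (lowerShellDim_eq_neg_of_tendsto hlim hc₀ ENNReal.ofReal_ne_top).trans (by norm_num)
  · exact hlim.congr fun t => by norm_num [hyperbolaDomain]
end
end

section
/- Let Ω ⊆ ℝ^N be Lebesgue measurable and 1 < φ₁ < φ₂. Then for any r ∈ ℝ with r ≠ -N: M̄_{φ₁}^r(∞,Ω) ≤ M̄_{φ₂}^r(∞,Ω) ≤ (1 - φ₁^{(N+r)(⌊log_{φ₁} φ₂⌋ + 1)})/(1 - φ₁^{N+r}) · M̄_{φ₁}^r(∞,Ω). -/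
open MeasureTheory Filter Set
open scoped ENNReal NNReal Topology

noncomputable section

/-!
With `k = ⌊log_{φ₁} φ₂⌋` we have `φ₂ < φ₁ ^ (k + 1)`, so the shell `[t, φ₂ t)` is covered by the
`k + 1` shells `[φ₁ⁿ t, φ₁ⁿ⁺¹ t)`, `n ≤ k`. Normalised by `t ^ (N + r)`, the `n`-th of them is
`(φ₁ ^ (N + r)) ^ n` times the `φ₁`-shell ratio at the scale `φ₁ⁿ t → ∞`, whose limsup is at most
`M̄_{φ₁}`. Subadditivity of `limsup` and the geometric sum give the constant; the first
inequality is just monotonicity of the shells in `φ`.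
-/

namespace ENNReal

variable {α : Type*} {f : Filter α}

/-- Variant of `ENNReal.limsup_add_le` without `CountableInterFilter`, which `atTop : Filter ℝ`
is not. -/
theorem limsup_add_le' (u v : α → ℝ≥0∞) :
    limsup (u + v) f ≤ limsup u f + limsup v f := by
  refine le_of_forall_gt fun c hc => ?_
  obtain ⟨a, ha, b, hb, hab⟩ := exists_add_lt_of_add_lt hc
  refine (limsup_le_of_le (by isBoundedDefault) ?_).trans_lt hab
  filter_upwards [eventually_lt_of_limsup_lt ha, eventually_lt_of_limsup_lt hb] with x hax hbx
  exact (ENNReal.add_lt_add hax hbx).le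

theorem limsup_sum_le {ι : Type*} (s : Finset ι) (u : ι → α → ℝ≥0∞) :
    limsup (fun x => ∑ i ∈ s, u i x) f ≤ ∑ i ∈ s, limsup (u i) f := by
  classical
  induction s using Finset.induction_on with
  | empty => simpa using (limsup_const_bot : limsup (fun _ : α => (⊥ : ℝ≥0∞)) f = ⊥)
  | insert i s hi ih =>
    simp only [Finset.sum_insert hi]
    exact (limsup_add_le' (u i) _).trans (add_le_add le_rfl ih)

end ENNReal

/-- `upperShellContent N Ω φ r` is definitionally `limsup (shellRatio N Ω φ r) atTop`. -/
def shellRatio (N : ℕ) (Ω : Set (EuclideanSpace ℝ (Fin N))) (φ r t : ℝ) : ℝ≥0∞ :=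
  volume (shell N t (φ * t) ∩ Ω) / ENNReal.ofReal (t ^ ((N : ℝ) + r))

variable {N : ℕ}

theorem shell_subset_shell {a b b' : ℝ} (h : b ≤ b') : shell N a b ⊆ shell N a b' :=
  fun _ hx => ⟨hx.1, hx.2.trans_le h⟩

theorem shell_subset_biUnion_shell (a : ℕ → ℝ) (k : ℕ) :
    shell N (a 0) (a (k + 1)) ⊆ ⋃ n ∈ Finset.range (k + 1), shell N (a n) (a (n + 1)) := by
  induction k with
  | zero => simp
  | succ k ih =>
    intro x hx
    simp only [mem_iUnion, Finset.mem_range, exists_prop]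
    by_cases hlt : ‖x‖ < a (k + 1)
    · obtain ⟨n, hn, hxn⟩ : ∃ n < k + 1, x ∈ shell N (a n) (a (n + 1)) := by
        simpa using ih ⟨hx.1, hlt⟩
      exact ⟨n, by omega, hxn⟩
    · exact ⟨k + 1, by omega, not_lt.mp hlt, hx.2⟩

variable {Ω : Set (EuclideanSpace ℝ (Fin N))} {r : ℝ}

theorem upperShellContent_mono {φ ψ : ℝ} (h : φ ≤ ψ) :
    upperShellContent N Ω φ r ≤ upperShellContent N Ω ψ r := by
  refine limsup_le_limsup ?_
  filter_upwards [eventually_ge_atTop 0] with t ht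
  gcongr
  exact shell_subset_shell (mul_le_mul_of_nonneg_right h ht)

theorem volume_shell_pow_div_rpow {φ t : ℝ} (hφ : 0 < φ) (ht : 0 < t) (n : ℕ) :
    volume (shell N (φ ^ n * t) (φ ^ (n + 1) * t) ∩ Ω) / ENNReal.ofReal (t ^ ((N : ℝ) + r)) =
      ENNReal.ofReal ((φ ^ ((N : ℝ) + r)) ^ n) * shellRatio N Ω φ r (φ ^ n * t) := by
  have hscale : (φ ^ n * t) ^ ((N : ℝ) + r) = (φ ^ ((N : ℝ) + r)) ^ n * t ^ ((N : ℝ) + r) := by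
    rw [Real.mul_rpow (by positivity) ht.le, ← Real.rpow_natCast, ← Real.rpow_natCast,
      ← Real.rpow_mul hφ.le, ← Real.rpow_mul hφ.le, mul_comm (n : ℝ)]
  have hpos : ENNReal.ofReal ((φ ^ ((N : ℝ) + r)) ^ n) ≠ 0 := by
    simp only [ne_eq, ENNReal.ofReal_eq_zero, not_le]; positivity
  rw [shellRatio, hscale, ENNReal.ofReal_mul (by positivity), ← mul_div_assoc, pow_succ',
    mul_assoc, ENNReal.mul_div_mul_left _ _ hpos ENNReal.ofReal_ne_top]

theorem shellRatio_pow_succ_le {φ t : ℝ} (hφ : 0 < φ) (ht : 0 < t) (k : ℕ) :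
    shellRatio N Ω (φ ^ (k + 1)) r t ≤
      ∑ n ∈ Finset.range (k + 1),
        ENNReal.ofReal ((φ ^ ((N : ℝ) + r)) ^ n) * shellRatio N Ω φ r (φ ^ n * t) := by
  have hcover := shell_subset_biUnion_shell (N := N) (fun n => φ ^ n * t) k
  simp only [pow_zero, one_mul] at hcover
  calc shellRatio N Ω (φ ^ (k + 1)) r t
      ≤ (∑ n ∈ Finset.range (k + 1), volume (shell N (φ ^ n * t) (φ ^ (n + 1) * t) ∩ Ω)) /
          ENNReal.ofReal (t ^ ((N : ℝ) + r)) := by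
        refine ENNReal.div_le_div_right ?_ _
        exact (measure_mono ((inter_subset_inter_left Ω hcover).trans
          (iUnion₂_inter _ _).subset)).trans (measure_biUnion_finset_le _ _)
    _ = _ := by
        simp only [div_eq_mul_inv, Finset.sum_mul]
        exact Finset.sum_congr rfl fun n _ => by
          rw [← div_eq_mul_inv, volume_shell_pow_div_rpow hφ ht n]

theorem upperShellContent_pow_succ_le {φ : ℝ} (hφ : 0 < φ) (k : ℕ) :
    upperShellContent N Ω (φ ^ (k + 1)) r ≤
      ENNReal.ofReal (∑ n ∈ Finset.range (k + 1), (φ ^ ((N : ℝ) + r)) ^ n) *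
        upperShellContent N Ω φ r := by
  calc upperShellContent N Ω (φ ^ (k + 1)) r
      ≤ limsup (fun t => ∑ n ∈ Finset.range (k + 1),
          ENNReal.ofReal ((φ ^ ((N : ℝ) + r)) ^ n) * shellRatio N Ω φ r (φ ^ n * t)) atTop :=
        limsup_le_limsup ((eventually_gt_atTop 0).mono fun t ht => shellRatio_pow_succ_le hφ ht k)
    _ ≤ ∑ n ∈ Finset.range (k + 1), limsup (fun t =>
          ENNReal.ofReal ((φ ^ ((N : ℝ) + r)) ^ n) * shellRatio N Ω φ r (φ ^ n * t)) atTop :=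
        ENNReal.limsup_sum_le _ _
    _ ≤ ∑ n ∈ Finset.range (k + 1),
          ENNReal.ofReal ((φ ^ ((N : ℝ) + r)) ^ n) * upperShellContent N Ω φ r := by
        gcongr with n
        rw [ENNReal.limsup_const_mul_of_ne_top ENNReal.ofReal_ne_top]
        gcongr
        exact (tendsto_id.const_mul_atTop (pow_pos hφ n)).limsup_comp_le_limsup
          (u := shellRatio N Ω φ r) (by isBoundedDefault) (by isBoundedDefault)
    _ = _ := by
        rw [← Finset.sum_mul, ENNReal.ofReal_sum_of_nonneg fun n _ => by positivity]

theorem lt_pow_toNat_floor_logb_add_one {b x : ℝ} (hb : 1 < b) (hx : 0 < x) :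
    x < b ^ (⌊Real.logb b x⌋.toNat + 1) := by
  calc x = b ^ Real.logb b x := (Real.rpow_logb (by linarith) hb.ne' hx).symm
    _ < b ^ ((⌊Real.logb b x⌋.toNat : ℝ) + 1) := by
        refine (Real.rpow_lt_rpow_left_iff hb).mpr ((Int.lt_floor_add_one _).trans_le ?_)
        have : (⌊Real.logb b x⌋ : ℝ) ≤ ((⌊Real.logb b x⌋.toNat : ℤ) : ℝ) := by
          exact_mod_cast Int.self_le_toNat _
        push_cast at this ⊢
        linarith
    _ = b ^ (⌊Real.logb b x⌋.toNat + 1) := by norm_cast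

theorem upper_shell_content_phi_comparison_general
    (N : ℕ) (Ω : Set (EuclideanSpace ℝ (Fin N)))
    (φ₁ φ₂ : ℝ) (hφ₁ : 1 < φ₁) (hφ₁₂ : φ₁ < φ₂) (r : ℝ) (hr : r ≠ -(N : ℝ)) :
    upperShellContent N Ω φ₁ r ≤ upperShellContent N Ω φ₂ r ∧
    upperShellContent N Ω φ₂ r ≤
      ENNReal.ofReal
        ((1 - φ₁ ^ (((N : ℝ) + r) * ((⌊Real.logb φ₁ φ₂⌋ : ℝ) + 1))) /
          (1 - φ₁ ^ ((N : ℝ) + r))) *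
        upperShellContent N Ω φ₁ r := by
  set k := ⌊Real.logb φ₁ φ₂⌋.toNat
  have hk : (⌊Real.logb φ₁ φ₂⌋ : ℝ) = k := by
    have : 0 ≤ ⌊Real.logb φ₁ φ₂⌋ := Int.floor_nonneg.mpr (Real.logb_nonneg hφ₁ (by linarith))
    exact_mod_cast (Int.toNat_of_nonneg this).symm
  have hratio : φ₁ ^ ((N : ℝ) + r) ≠ 1 := fun h => hr <| by
    have := (Real.rpow_right_inj (by linarith) hφ₁.ne').mp (h.trans (Real.rpow_zero φ₁).symm)
    linarith
  refine ⟨upperShellContent_mono hφ₁₂.le, ?_⟩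
  calc upperShellContent N Ω φ₂ r
      ≤ upperShellContent N Ω (φ₁ ^ (k + 1)) r :=
        upperShellContent_mono (lt_pow_toNat_floor_logb_add_one hφ₁ (by linarith)).le
    _ ≤ _ := upperShellContent_pow_succ_le (by linarith) k
    _ = _ := by
        rw [Finset.range_eq_Ico, geom_sum_Ico' hratio (Nat.zero_le _), pow_zero, hk,
          ← Real.rpow_natCast, ← Real.rpow_mul (by linarith)]
        norm_cast

theorem upper_shell_content_phi_comparison
    (N : ℕ) (Ω : Set (EuclideanSpace ℝ (Fin N))) (hΩ : MeasurableSet Ω)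
    (φ₁ φ₂ : ℝ) (hφ₁ : 1 < φ₁) (hφ₁₂ : φ₁ < φ₂) (r : ℝ) (hr : r ≠ -(N : ℝ)) :
    upperShellContent N Ω φ₁ r ≤ upperShellContent N Ω φ₂ r ∧
    upperShellContent N Ω φ₂ r ≤
      ENNReal.ofReal
        ((1 - φ₁ ^ (((N : ℝ) + r) * ((⌊Real.logb φ₁ φ₂⌋ : ℝ) + 1))) /
          (1 - φ₁ ^ ((N : ℝ) + r))) *
        upperShellContent N Ω φ₁ r :=
  upper_shell_content_phi_comparison_general N Ω φ₁ φ₂ hφ₁ hφ₁₂ r hr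
end
end

section
/- Let Ω ⊆ ℝ^N be Lebesgue measurable and 1 < φ₁ < φ₂. Then M̄_{φ₁}^{-N}(∞,Ω) ≤ M̄_{φ₂}^{-N}(∞,Ω) ≤ (⌊log_{φ₁} φ₂⌋ + 1) · M̄_{φ₁}^{-N}(∞,Ω), and ⌊log_{φ₁} φ₂⌋ · M̲_{φ₁}^{-N}(∞,Ω) ≤ M̲_{φ₂}^{-N}(∞,Ω). -/
open MeasureTheory Filter Set
open scoped ENNReal NNReal Topology

noncomputable section

lemma shell_measurable (N : ℕ) (a b : ℝ) : MeasurableSet (shell N a b) :=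
  measurable_norm measurableSet_Ico

lemma my_limsup_add_le (f : Filter ℝ) (u v : ℝ → ℝ≥0∞) :
    limsup (fun i => u i + v i) f ≤ limsup u f + limsup v f := by
  rcases eq_top_or_lt_top (limsup u f) with h | h
  · rw [h, top_add]; exact le_top
  rcases eq_top_or_lt_top (limsup v f) with h' | h'
  · rw [h', add_top]; exact le_top
  refine ENNReal.le_of_forall_pos_le_add fun ε hε _ => ?_
  have hε2 : (0:ℝ≥0∞) < (ε:ℝ≥0∞)/2 := ENNReal.div_pos (by exact_mod_cast hε.ne') (by norm_num)
  have hu : ∀ᶠ i in f, u i < limsup u f + (ε:ℝ≥0∞)/2 :=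
    eventually_lt_of_limsup_lt (ENNReal.lt_add_right h.ne hε2.ne')
  have hv : ∀ᶠ i in f, v i < limsup v f + (ε:ℝ≥0∞)/2 :=
    eventually_lt_of_limsup_lt (ENNReal.lt_add_right h'.ne hε2.ne')
  refine limsup_le_of_le (by isBoundedDefault) ?_
  filter_upwards [hu, hv] with i h1 h2
  calc u i + v i ≤ (limsup u f + (ε:ℝ≥0∞)/2) + (limsup v f + (ε:ℝ≥0∞)/2) :=
        add_le_add h1.le h2.le
    _ = limsup u f + limsup v f + ε := by
        rw [add_add_add_comm, ENNReal.add_halves]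

lemma my_le_liminf_add (f : Filter ℝ) (u v : ℝ → ℝ≥0∞) :
    liminf u f + liminf v f ≤ liminf (fun i => u i + v i) f := by
  rcases eq_or_ne (liminf u f) 0 with h | h
  · rw [h, zero_add]
    exact liminf_le_liminf (Eventually.of_forall fun i => le_add_self)
  rcases eq_or_ne (liminf v f) 0 with h' | h'
  · rw [h', add_zero]
    exact liminf_le_liminf (Eventually.of_forall fun i => le_add_right le_rfl)
  by_contra hcon
  push_neg at hcon
  obtain ⟨a, ha, b, hb, hlt⟩ := ENNReal.exists_lt_add_of_lt_add hcon h h'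
  have h1 : ∀ᶠ i in f, a < u i := eventually_lt_of_lt_liminf ha
  have h2 : ∀ᶠ i in f, b < v i := eventually_lt_of_lt_liminf hb
  have : a + b ≤ liminf (fun i => u i + v i) f := by
    refine le_liminf_of_le (by isBoundedDefault) ?_
    filter_upwards [h1, h2] with i h1 h2
    exact add_le_add h1.le h2.le
  exact absurd this hlt.not_ge

lemma my_limsup_sum_le (f : Filter ℝ) (n : ℕ) (w : ℕ → ℝ → ℝ≥0∞) :
    limsup (fun t => ∑ i ∈ Finset.range n, w i t) f ≤
      ∑ i ∈ Finset.range n, limsup (w i) f := by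
  induction n with
  | zero =>
    simp only [Finset.range_zero, Finset.sum_empty]
    rw [← ENNReal.bot_eq_zero, limsup_const_bot]
  | succ n ih =>
    simp only [Finset.sum_range_succ]
    exact le_trans (my_limsup_add_le f _ _) (add_le_add ih le_rfl)

lemma my_sum_le_liminf (f : Filter ℝ) (n : ℕ) (w : ℕ → ℝ → ℝ≥0∞) :
    ∑ i ∈ Finset.range n, liminf (w i) f ≤
      liminf (fun t => ∑ i ∈ Finset.range n, w i t) f := by
  induction n with
  | zero => simp
  | succ n ih =>
    simp only [Finset.sum_range_succ]
    exact le_trans (add_le_add ih le_rfl) (my_le_liminf_add f _ _)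

lemma limsup_comp_mul_le (F : ℝ → ℝ≥0∞) {c : ℝ} (hc : 0 < c) :
    limsup (fun t => F (c * t)) atTop ≤ limsup F atTop :=
  limsup_le_limsup_of_le (Filter.tendsto_id.const_mul_atTop hc)

lemma liminf_le_liminf_comp_mul (F : ℝ → ℝ≥0∞) {c : ℝ} (hc : 0 < c) :
    liminf F atTop ≤ liminf (fun t => F (c * t)) atTop :=
  liminf_le_liminf_of_le (Filter.tendsto_id.const_mul_atTop hc)

-- shell decomposition
lemma shell_subset_iUnion (N : ℕ) {φ t : ℝ} (hφ : 1 < φ) (ht : 0 < t) (n : ℕ) :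
    shell N t (φ ^ n * t) ⊆ ⋃ i ∈ Finset.range n, shell N (φ ^ i * t) (φ * (φ ^ i * t)) := by
  induction n with
  | zero =>
    intro x hx
    simp only [pow_zero, one_mul] at hx
    exact absurd (lt_of_le_of_lt hx.1 hx.2) (lt_irrefl _)
  | succ n ih =>
    intro x hx
    by_cases h : ‖x‖ < φ ^ n * t
    · obtain ⟨s, hs⟩ := mem_iUnion.1 (ih ⟨hx.1, h⟩)
      refine mem_iUnion.2 ⟨s, ?_⟩
      simp only [mem_iUnion, exists_prop, Finset.mem_range] at hs ⊢
      exact ⟨Nat.lt_succ_of_lt hs.1, hs.2⟩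
    · refine mem_iUnion.2 ⟨n, ?_⟩
      simp only [mem_iUnion, exists_prop, Finset.mem_range]
      refine ⟨Nat.lt_succ_self n, not_lt.1 h, ?_⟩
      have : φ * (φ ^ n * t) = φ ^ (n + 1) * t := by ring
      rw [this]
      exact hx.2

lemma shell_mono_right (N : ℕ) {a b b' : ℝ} (h : b ≤ b') : shell N a b ⊆ shell N a b' :=
  fun x hx => ⟨hx.1, hx.2.trans_le h⟩

lemma shell_piece_subset (N : ℕ) {φ t : ℝ} (hφ : 1 < φ) (ht : 0 < t) {i n : ℕ} (hi : i < n) :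
    shell N (φ ^ i * t) (φ * (φ ^ i * t)) ⊆ shell N t (φ ^ n * t) := by
  intro x hx
  refine ⟨le_trans ?_ hx.1, lt_of_lt_of_le hx.2 ?_⟩
  · exact le_mul_of_one_le_left ht.le (one_le_pow₀ hφ.le)
  · have h1 : φ * (φ ^ i * t) = φ ^ (i + 1) * t := by ring
    rw [h1]
    exact mul_le_mul_of_nonneg_right (pow_le_pow_right₀ hφ.le hi) ht.le

lemma shell_pieces_disjoint (N : ℕ) {φ t : ℝ} (hφ : 1 < φ) (ht : 0 < t) {i j : ℕ} (hij : i < j) :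
    Disjoint (shell N (φ ^ i * t) (φ * (φ ^ i * t))) (shell N (φ ^ j * t) (φ * (φ ^ j * t))) := by
  rw [Set.disjoint_left]
  intro x hx hx'
  have h1 : φ * (φ ^ i * t) ≤ φ ^ j * t := by
    have : φ * (φ ^ i * t) = φ ^ (i + 1) * t := by ring
    rw [this]
    exact mul_le_mul_of_nonneg_right (pow_le_pow_right₀ hφ.le hij) ht.le
  exact absurd ((hx.2.trans_le h1).trans_le hx'.1) (lt_irrefl _)

theorem shell_content_phi_comparison_critical
    (N : ℕ) (Ω : Set (EuclideanSpace ℝ (Fin N))) (hΩ : MeasurableSet Ω)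
    (φ₁ φ₂ : ℝ) (hφ₁ : 1 < φ₁) (hφ₁₂ : φ₁ < φ₂) :
    upperShellContent N Ω φ₁ (-(N : ℝ)) ≤ upperShellContent N Ω φ₂ (-(N : ℝ)) ∧
    upperShellContent N Ω φ₂ (-(N : ℝ)) ≤
      ENNReal.ofReal ((⌊Real.logb φ₁ φ₂⌋ : ℝ) + 1) * upperShellContent N Ω φ₁ (-(N : ℝ)) ∧
    ENNReal.ofReal ((⌊Real.logb φ₁ φ₂⌋ : ℝ)) * lowerShellContent N Ω φ₁ (-(N : ℝ)) ≤
      lowerShellContent N Ω φ₂ (-(N : ℝ)) := by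
  set G : ℝ → ℝ → ℝ≥0∞ := fun φ t => volume (shell N t (φ * t) ∩ Ω) with hG
  have hzero : ((N:ℝ) + -(N:ℝ)) = 0 := add_neg_cancel _
  have hU : ∀ φ : ℝ, upperShellContent N Ω φ (-(N:ℝ)) = limsup (G φ) atTop := by
    intro φ
    unfold upperShellContent
    simp only [hzero, Real.rpow_zero, ENNReal.ofReal_one, div_one, hG]
  have hL : ∀ φ : ℝ, lowerShellContent N Ω φ (-(N:ℝ)) = liminf (G φ) atTop := by
    intro φ
    unfold lowerShellContent
    simp only [hzero, Real.rpow_zero, ENNReal.ofReal_one, div_one, hG]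
  have hφ₁0 : (0:ℝ) < φ₁ := one_pos.trans hφ₁
  have hφ₂0 : (0:ℝ) < φ₂ := hφ₁0.trans hφ₁₂
  set k : ℕ := (⌊Real.logb φ₁ φ₂⌋).toNat with hk
  have hlogb1 : 1 < Real.logb φ₁ φ₂ := by
    have := Real.logb_lt_logb (b := φ₁) hφ₁ hφ₁0 hφ₁₂
    rwa [Real.logb_self_eq_one hφ₁] at this
  have hfloor1 : 1 ≤ ⌊Real.logb φ₁ φ₂⌋ := Int.le_floor.2 (by exact_mod_cast hlogb1.le)
  have hkcast : ((k:ℤ)) = ⌊Real.logb φ₁ φ₂⌋ := Int.toNat_of_nonneg (le_trans zero_le_one hfloor1)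
  have hkR : ((⌊Real.logb φ₁ φ₂⌋ : ℝ)) = (k:ℝ) := by exact_mod_cast hkcast.symm
  have hpow_up : φ₂ ≤ φ₁ ^ (k+1) := by
    have h1 : Real.logb φ₁ φ₂ ≤ ((k+1:ℕ):ℝ) := by
      push_cast
      rw [← hkR]
      exact (Int.lt_floor_add_one _).le
    calc φ₂ = φ₁ ^ (Real.logb φ₁ φ₂) := (Real.rpow_logb hφ₁0 (ne_of_gt hφ₁) hφ₂0).symm
      _ ≤ φ₁ ^ ((k+1:ℕ):ℝ) := Real.rpow_le_rpow_of_exponent_le hφ₁.le h1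
      _ = φ₁ ^ (k+1) := Real.rpow_natCast _ _
  have hpow_lo : φ₁ ^ k ≤ φ₂ := by
    have h1 : ((k:ℕ):ℝ) ≤ Real.logb φ₁ φ₂ := by
      rw [← hkR]; exact Int.floor_le _
    calc φ₁ ^ k = φ₁ ^ ((k:ℕ):ℝ) := (Real.rpow_natCast _ _).symm
      _ ≤ φ₁ ^ Real.logb φ₁ φ₂ := Real.rpow_le_rpow_of_exponent_le hφ₁.le h1
      _ = φ₂ := Real.rpow_logb hφ₁0 (ne_of_gt hφ₁) hφ₂0
  refine ⟨?_, ?_, ?_⟩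
  · -- first inequality
    rw [hU, hU]
    refine limsup_le_limsup ?_
    filter_upwards [eventually_gt_atTop (0:ℝ)] with t ht
    refine measure_mono (inter_subset_inter_left _ ?_)
    exact shell_mono_right N (mul_le_mul_of_nonneg_right hφ₁₂.le ht.le)
  · -- second inequality
    rw [hU, hU]
    have hev2 : ∀ᶠ t : ℝ in atTop, G φ₂ t ≤ ∑ i ∈ Finset.range (k+1), G φ₁ (φ₁^i * t) := by
      filter_upwards [eventually_gt_atTop (0:ℝ)] with t ht
      have hsub : shell N t (φ₂*t) ∩ Ω ⊆
          ⋃ i ∈ Finset.range (k+1), (shell N (φ₁^i*t) (φ₁*(φ₁^i*t)) ∩ Ω) := by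
        intro x hx
        have hx1 : x ∈ shell N t (φ₁^(k+1)*t) :=
          shell_mono_right N (mul_le_mul_of_nonneg_right hpow_up ht.le) hx.1
        obtain ⟨i, hi, hxi⟩ := mem_iUnion₂.1 (shell_subset_iUnion N hφ₁ ht (k+1) hx1)
        exact mem_iUnion₂.2 ⟨i, hi, hxi, hx.2⟩
      calc G φ₂ t ≤ volume (⋃ i ∈ Finset.range (k+1), (shell N (φ₁^i*t) (φ₁*(φ₁^i*t)) ∩ Ω)) :=
            measure_mono hsub
        _ ≤ ∑ i ∈ Finset.range (k+1), volume (shell N (φ₁^i*t) (φ₁*(φ₁^i*t)) ∩ Ω) :=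
            measure_biUnion_finset_le _ _
        _ = ∑ i ∈ Finset.range (k+1), G φ₁ (φ₁^i * t) := rfl
    calc limsup (G φ₂) atTop
        ≤ limsup (fun t => ∑ i ∈ Finset.range (k+1), G φ₁ (φ₁^i * t)) atTop :=
          limsup_le_limsup hev2
      _ ≤ ∑ i ∈ Finset.range (k+1), limsup (fun t => G φ₁ (φ₁^i * t)) atTop :=
          my_limsup_sum_le _ _ _
      _ ≤ ∑ _i ∈ Finset.range (k+1), limsup (G φ₁) atTop :=
          Finset.sum_le_sum fun i _ => limsup_comp_mul_le _ (pow_pos hφ₁0 i)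
      _ = ((k+1:ℕ) : ℝ≥0∞) * limsup (G φ₁) atTop := by
          rw [Finset.sum_const, Finset.card_range, nsmul_eq_mul]
      _ = ENNReal.ofReal ((⌊Real.logb φ₁ φ₂⌋ : ℝ) + 1) * limsup (G φ₁) atTop := by
          rw [hkR]
          have h2 : ((k:ℝ)+1) = ((k+1:ℕ):ℝ) := by push_cast; ring
          rw [h2, ENNReal.ofReal_natCast]
  · -- third inequality
    rw [hL, hL]
    have hev3 : ∀ᶠ t : ℝ in atTop, ∑ i ∈ Finset.range k, G φ₁ (φ₁^i * t) ≤ G φ₂ t := by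
      filter_upwards [eventually_gt_atTop (0:ℝ)] with t ht
      have hmeas : ∀ i ∈ Finset.range k, MeasurableSet (shell N (φ₁^i*t) (φ₁*(φ₁^i*t)) ∩ Ω) :=
        fun i _ => (shell_measurable _ _ _).inter hΩ
      have hdisj : Set.PairwiseDisjoint (↑(Finset.range k))
          (fun i => shell N (φ₁^i*t) (φ₁*(φ₁^i*t)) ∩ Ω) := by
        intro i _ j _ hij
        rcases hij.lt_or_gt with h | h
        · exact (shell_pieces_disjoint N hφ₁ ht h).mono inter_subset_left inter_subset_left
        · exact ((shell_pieces_disjoint N hφ₁ ht h).mono inter_subset_left inter_subset_left).symm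
      have hsum : ∑ i ∈ Finset.range k, G φ₁ (φ₁^i * t) =
          volume (⋃ i ∈ Finset.range k, (shell N (φ₁^i*t) (φ₁*(φ₁^i*t)) ∩ Ω)) :=
        (measure_biUnion_finset hdisj hmeas).symm
      rw [hsum]
      refine measure_mono (iUnion₂_subset fun i hi => inter_subset_inter_left _ ?_)
      refine (shell_piece_subset N hφ₁ ht (Finset.mem_range.1 hi)).trans
        (shell_mono_right N ?_)
      exact mul_le_mul_of_nonneg_right hpow_lo ht.le
    calc ENNReal.ofReal ((⌊Real.logb φ₁ φ₂⌋ : ℝ)) * liminf (G φ₁) atTop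
        = ((k:ℕ) : ℝ≥0∞) * liminf (G φ₁) atTop := by rw [hkR, ENNReal.ofReal_natCast]
      _ = ∑ _i ∈ Finset.range k, liminf (G φ₁) atTop := by
          rw [Finset.sum_const, Finset.card_range, nsmul_eq_mul]
      _ ≤ ∑ i ∈ Finset.range k, liminf (fun t => G φ₁ (φ₁^i * t)) atTop :=
          Finset.sum_le_sum fun i _ => liminf_le_liminf_comp_mul _ (pow_pos hφ₁0 i)
      _ ≤ liminf (fun t => ∑ i ∈ Finset.range k, G φ₁ (φ₁^i * t)) atTop :=
          my_sum_le_liminf _ _ _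
      _ ≤ liminf (G φ₂) atTop := liminf_le_liminf hev3

end
end

section
/- Fix q > 0 and let Ω := ⋃_{n≥0} (2^{2n+1}, 2^{2n+1} + 2^{-2nq}) ⊂ ℝ. Then for the sequence t_n = 2^{2n} one has |B_{t_n, 2t_n}(0) ∩ Ω| = 0 for all n, hence the lower 2-shell Minkowski content M̲_2^r(∞,Ω) = 0 for every r ∈ ℝ and the lower 2-shell Minkowski dimension at infinity equals -∞. -/
open MeasureTheory Filter Set
open scoped ENNReal NNReal Topology

noncomputable section

/-- The `[a,b)`-shell centered at the origin in `ℝ`. -/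
def shell1 (a b : ℝ) : Set ℝ := {x | a ≤ |x| ∧ |x| < b}

/-- Lower φ-shell Minkowski content of `Ω ⊆ ℝ` at infinity (here `N = 1`). -/
def lowerShellContent1 (Ω : Set ℝ) (φ r : ℝ) : ℝ≥0∞ :=
  Filter.liminf (fun t : ℝ =>
    volume (shell1 t (φ * t) ∩ Ω) / ENNReal.ofReal (t ^ ((1 : ℝ) + r))) Filter.atTop

/-- Upper φ-shell Minkowski content of `Ω ⊆ ℝ` at infinity (here `N = 1`). -/
def upperShellContent1 (Ω : Set ℝ) (φ r : ℝ) : ℝ≥0∞ :=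
  Filter.limsup (fun t : ℝ =>
    volume (shell1 t (φ * t) ∩ Ω) / ENNReal.ofReal (t ^ ((1 : ℝ) + r))) Filter.atTop

/-- Lower φ-shell Minkowski dimension of `Ω ⊆ ℝ` at infinity. -/
def lowerShellDim1 (Ω : Set ℝ) (φ : ℝ) : EReal :=
  sInf ((fun r : ℝ => (r : EReal)) '' {r : ℝ | lowerShellContent1 Ω φ r = 0})

/-- Upper φ-shell Minkowski dimension of `Ω ⊆ ℝ` at infinity. -/
def upperShellDim1 (Ω : Set ℝ) (φ : ℝ) : EReal :=
  sInf ((fun r : ℝ => (r : EReal)) '' {r : ℝ | upperShellContent1 Ω φ r = 0})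

/-- The quasiperiodic union of intervals from Example `donji_kontraprim`. -/
def qpSet (q : ℝ) : Set ℝ :=
  ⋃ n : ℕ, Ioo ((2 : ℝ) ^ (2 * n + 1)) ((2 : ℝ) ^ (2 * n + 1) + (2 : ℝ) ^ (-(2 * (n : ℝ) * q)))

/-!
For `q ≥ 0` every interval of `qpSet q` has length at most `1`, so it lies in an odd dyadic block
`(2^(2m+1), 2^(2m+2))`, whereas the shell `[4^n, 2·4^n)` is an even dyadic block. Hence these shells
miss the set entirely, and as `4^n → ∞` the liminf defining the lower content vanishes for every
exponent `r`.
-/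

lemma Ico_pow_disjoint_Ioo_pow {b : ℝ} (hb : 1 < b) {k j : ℕ} (hkj : k ≠ j) :
    Disjoint (Ico (b ^ k) (b ^ (k + 1))) (Ioo (b ^ j) (b ^ (j + 1))) := by
  refine Set.disjoint_left.mpr fun x ⟨hkx, hxk⟩ ⟨hjx, hxj⟩ => hkj ?_
  have hk : k < j + 1 := (pow_lt_pow_iff_right₀ hb).mp (hkx.trans_lt hxj)
  have hj : j < k + 1 := (pow_lt_pow_iff_right₀ hb).mp (hjx.trans hxk)
  omega

lemma shell1_inter_eq_Ico_inter {a b : ℝ} (ha : 0 ≤ a) {s : Set ℝ} (hs : s ⊆ Ioi 0) :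
    shell1 a b ∩ s = Ico a b ∩ s := by
  ext x
  constructor
  · rintro ⟨⟨hax, hxb⟩, hxs⟩
    rw [abs_of_pos (hs hxs : 0 < x)] at hax hxb
    exact ⟨⟨hax, hxb⟩, hxs⟩
  · rintro ⟨⟨hax, hxb⟩, hxs⟩
    exact ⟨⟨hax.trans (le_abs_self x), by rwa [abs_of_nonneg (ha.trans hax)]⟩, hxs⟩

lemma qpSet_subset_iUnion_Ioo {q : ℝ} (hq : 0 ≤ q) :
    qpSet q ⊆ ⋃ m : ℕ, Ioo ((2 : ℝ) ^ (2 * m + 1)) (2 ^ (2 * m + 1 + 1)) := by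
  refine iUnion_mono fun m => Ioo_subset_Ioo_right ?_
  have hgap : (2 : ℝ) ^ (-(2 * (m : ℝ) * q)) ≤ 1 :=
    Real.rpow_le_one_of_one_le_of_nonpos one_le_two (by simp only [neg_nonpos]; positivity)
  have hone : (1 : ℝ) ≤ 2 ^ (2 * m + 1) := one_le_pow₀ one_le_two
  rw [pow_succ _ (2 * m + 1)]
  linarith

lemma qpSet_subset_Ioi {q : ℝ} (hq : 0 ≤ q) : qpSet q ⊆ Ioi 0 :=
  (qpSet_subset_iUnion_Ioo hq).trans <| iUnion_subset fun _ =>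
    Ioo_subset_Ioi_self.trans (Ioi_subset_Ioi (by positivity))

lemma shell1_inter_qpSet_eq_empty {q : ℝ} (hq : 0 ≤ q) (n : ℕ) :
    shell1 ((2 : ℝ) ^ (2 * n)) (2 * 2 ^ (2 * n)) ∩ qpSet q = ∅ := by
  rw [shell1_inter_eq_Ico_inter (by positivity) (qpSet_subset_Ioi hq), ← pow_succ',
    ← Set.disjoint_iff_inter_eq_empty]
  refine (Set.disjoint_iUnion_right.mpr fun m => ?_).mono_right (qpSet_subset_iUnion_Ioo hq)
  exact Ico_pow_disjoint_Ioo_pow one_lt_two (by omega)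

lemma lowerShellContent1_eq_zero_of_frequently {Ω : Set ℝ} {φ : ℝ}
    (h : ∃ᶠ t in atTop, volume (shell1 t (φ * t) ∩ Ω) = 0) (r : ℝ) :
    lowerShellContent1 Ω φ r = 0 :=
  nonpos_iff_eq_zero.mp <| liminf_le_of_frequently_le' <| h.mono fun t ht => by
    rw [ht, ENNReal.zero_div]

lemma lowerShellDim1_eq_bot_of_forall {Ω : Set ℝ} {φ : ℝ}
    (h : ∀ r, lowerShellContent1 Ω φ r = 0) : lowerShellDim1 Ω φ = ⊥ := by
  refine (EReal.eq_bot_iff_forall_lt _).mpr fun y => ?_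
  calc lowerShellDim1 Ω φ ≤ ((y - 1 : ℝ) : EReal) := sInf_le ⟨y - 1, h _, rfl⟩
    _ < y := by exact_mod_cast sub_one_lt y

lemma tendsto_two_pow_two_mul_atTop : Tendsto (fun n : ℕ => (2 : ℝ) ^ (2 * n)) atTop atTop := by
  simp only [pow_mul]
  exact tendsto_pow_atTop_atTop_of_one_lt (by norm_num)

theorem qpSet_lower_two_shell_degenerate (q : ℝ) (hq : 0 < q) :
    (∀ n : ℕ, volume (shell1 ((2 : ℝ) ^ (2 * n)) (2 * (2 : ℝ) ^ (2 * n)) ∩ qpSet q) = 0) ∧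
    (∀ r : ℝ, lowerShellContent1 (qpSet q) 2 r = 0) ∧
    lowerShellDim1 (qpSet q) 2 = ⊥ := by
  have hvol : ∀ n : ℕ,
      volume (shell1 ((2 : ℝ) ^ (2 * n)) (2 * (2 : ℝ) ^ (2 * n)) ∩ qpSet q) = 0 := fun n => by
    rw [shell1_inter_qpSet_eq_empty hq.le n, measure_empty]
  have hcontent : ∀ r : ℝ, lowerShellContent1 (qpSet q) 2 r = 0 :=
    lowerShellContent1_eq_zero_of_frequently <|
      tendsto_two_pow_two_mul_atTop.frequently (Frequently.of_forall hvol)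
  exact ⟨hvol, hcontent, lowerShellDim1_eq_bot_of_forall hcontent⟩
end
end

section
/- Let Ω ⊆ ℝ^N be Lebesgue measurable, T > 0, φ > 1, and suppose D := dim_B^φ(∞,Ω) exists with -N < D ≤ 0 and M̲_φ^D(∞,Ω) > 0. Then ζ_{∞,Ω}(s) = ∫_{B_T(0)^c ∩ Ω} |x|^{-s-N} dx → +∞ as s → D⁺ along the reals. -/
open MeasureTheory Filter Set
open scoped ENNReal NNReal Topology

noncomputable section

theorem zeta_tendsto_top_at_dim
    (N : ℕ) (Ω : Set (EuclideanSpace ℝ (Fin N))) (hΩ : MeasurableSet Ω)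
    (T : ℝ) (hT : 0 < T) (φ : ℝ) (hφ : 1 < φ) (D : ℝ)
    (hDupper : upperShellDim N Ω φ = (D : EReal))
    (hDlower : lowerShellDim N Ω φ = (D : EReal))
    (hDN : -(N : ℝ) < D) (hD0 : D ≤ 0)
    (hM : 0 < lowerShellContent N Ω φ D) :
    Filter.Tendsto (fun s : ℝ =>
        ∫⁻ x in farBall N T ∩ Ω, ENNReal.ofReal (‖x‖ ^ (-s - (N : ℝ))))
      (nhdsWithin D (Ioi D)) (nhds ⊤) := by
  obtain ⟨ε, hε0, hεL⟩ := exists_between hM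
  have hεtop : ε ≠ ⊤ := (lt_of_lt_of_le hεL le_top).ne
  have hev := Filter.eventually_lt_of_lt_liminf hεL
  rw [Filter.eventually_atTop] at hev
  obtain ⟨T₀, hT₀⟩ := hev
  set T₁ : ℝ := max T₀ (max T 1) with hT₁def
  have hT₁1 : 1 ≤ T₁ := le_max_of_le_right (le_max_right _ _)
  have hT₁0 : 0 < T₁ := lt_of_lt_of_le one_pos hT₁1
  have hT₁T : T ≤ T₁ := le_max_of_le_right (le_max_left _ _)
  have hT₁T₀ : T₀ ≤ T₁ := le_max_left _ _
  have hφ0 : 0 < φ := lt_trans one_pos hφ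
  set t : ℕ → ℝ := fun k => T₁ * φ ^ k with ht
  have htpos : ∀ k, 0 < t k := fun k => mul_pos hT₁0 (pow_pos hφ0 k)
  have htge : ∀ k, T₁ ≤ t k := fun k =>
    le_mul_of_one_le_right hT₁0.le (one_le_pow₀ hφ.le)
  set A : ℕ → Set (EuclideanSpace ℝ (Fin N)) := fun k => shell N (t k) (φ * t k) ∩ Ω with hA
  have hshellmeas : ∀ a b : ℝ, MeasurableSet (shell N a b) := fun a b => by
    have : shell N a b = (fun x : EuclideanSpace ℝ (Fin N) => ‖x‖) ⁻¹' (Ici a ∩ Iio b) := by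
      ext x; simp [shell]
    rw [this]
    exact measurable_norm (measurableSet_Ici.inter measurableSet_Iio)
  have hAmeas : ∀ k, MeasurableSet (A k) := fun k => (hshellmeas _ _).inter hΩ
  have hkey : ∀ i j : ℕ, i < j → Disjoint (A i) (A j) := by
    intro i j hlt
    refine Set.disjoint_left.2 fun x hxi hxj => ?_
    have h1 : ‖x‖ < φ * t i := hxi.1.2
    have h2 : t j ≤ ‖x‖ := hxj.1.1
    have : φ * t i ≤ t j := by
      have : φ ^ (i + 1) ≤ φ ^ j := pow_le_pow_right₀ hφ.le hlt
      calc φ * t i = T₁ * φ ^ (i + 1) := by ring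
        _ ≤ T₁ * φ ^ j := by nlinarith [hT₁0]
    linarith
  have hAdisj : Pairwise (Function.onFun Disjoint A) := by
    intro i j hij
    rcases lt_or_gt_of_ne hij with h | h
    · exact hkey i j h
    · exact (hkey j i h).symm
  have hAsub : (⋃ k, A k) ⊆ farBall N T ∩ Ω := by
    rintro x ⟨_, ⟨k, rfl⟩, hx⟩
    exact ⟨le_trans (le_trans hT₁T (htge k)) hx.1.1, hx.2⟩
  have hvol : ∀ k, ε * ENNReal.ofReal (t k ^ ((N : ℝ) + D)) ≤ volume (A k) := by
    intro k
    have hk := (hT₀ (t k) (le_trans hT₁T₀ (htge k))).le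
    have hne : ENNReal.ofReal (t k ^ ((N : ℝ) + D)) ≠ 0 :=
      (ENNReal.ofReal_pos.2 (Real.rpow_pos_of_pos (htpos k) _)).ne'
    rwa [ENNReal.le_div_iff_mul_le (Or.inl hne) (Or.inl ENNReal.ofReal_ne_top)] at hk
  rw [ENNReal.tendsto_nhds_top_iff_nnreal]
  intro M
  set β : ℝ := φ ^ (-D - (N : ℝ)) / 2 with hβ
  have hβ0 : 0 < β := by positivity
  set δ : ℝ≥0∞ := ε * ENNReal.ofReal β with hδ
  have hδ0 : δ ≠ 0 := by
    rw [hδ]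
    exact mul_ne_zero hε0.ne' (ENNReal.ofReal_pos.2 hβ0).ne'
  have hδtop : δ ≠ ⊤ := ENNReal.mul_ne_top hεtop ENNReal.ofReal_ne_top
  obtain ⟨K, hK⟩ := ENNReal.exists_nat_gt (ENNReal.div_lt_top ENNReal.coe_ne_top hδ0).ne
  have hMK : (M : ℝ≥0∞) < K * δ := by
    rwa [ENNReal.div_lt_iff (Or.inl hδ0) (Or.inl hδtop)] at hK
  -- per-shell eventual bound
  have hg : ∀ k : ℕ, ∀ᶠ s in nhdsWithin D (Ioi D),
      β ≤ (φ * t k) ^ (-s - (N : ℝ)) * t k ^ ((N : ℝ) + D) := by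
    intro k
    have hc : 0 < φ * t k := mul_pos hφ0 (htpos k)
    have hcont : Continuous fun s : ℝ => (φ * t k) ^ (-s - (N : ℝ)) * t k ^ ((N : ℝ) + D) := by
      simp only [Real.rpow_def_of_pos hc]
      fun_prop
    have hval : (φ * t k) ^ (-D - (N : ℝ)) * t k ^ ((N : ℝ) + D) = φ ^ (-D - (N : ℝ)) := by
      rw [Real.mul_rpow hφ0.le (htpos k).le, mul_assoc, ← Real.rpow_add (htpos k),
        show (-D - (N : ℝ)) + ((N : ℝ) + D) = 0 by ring, Real.rpow_zero, mul_one]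
    have htd : Filter.Tendsto (fun s : ℝ => (φ * t k) ^ (-s - (N : ℝ)) * t k ^ ((N : ℝ) + D))
        (nhdsWithin D (Ioi D)) (nhds (φ ^ (-D - (N : ℝ)))) := by
      rw [← hval]
      exact (hcont.tendsto D).mono_left nhdsWithin_le_nhds
    exact htd.eventually (eventually_ge_nhds (by rw [hβ]; linarith [Real.rpow_pos_of_pos hφ0 (-D - (N:ℝ))]))
  have hall : ∀ᶠ s in nhdsWithin D (Ioi D), ∀ k ∈ Finset.range K,
      β ≤ (φ * t k) ^ (-s - (N : ℝ)) * t k ^ ((N : ℝ) + D) :=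
    (Filter.eventually_all_finset _).2 fun k _ => hg k
  filter_upwards [hall, self_mem_nhdsWithin] with s hs hsD
  have hsD' : D < s := hsD
  have hexp : -s - (N : ℝ) ≤ 0 := by linarith
  -- per-shell integral bound
  have hterm : ∀ k ∈ Finset.range K,
      δ ≤ ∫⁻ x in A k, ENNReal.ofReal (‖x‖ ^ (-s - (N : ℝ))) := by
    intro k hk
    have h1 : δ ≤ ENNReal.ofReal ((φ * t k) ^ (-s - (N : ℝ))) *
        (ε * ENNReal.ofReal (t k ^ ((N : ℝ) + D))) := by
      rw [hδ]
      calc ε * ENNReal.ofReal β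
          ≤ ε * ENNReal.ofReal ((φ * t k) ^ (-s - (N : ℝ)) * t k ^ ((N : ℝ) + D)) :=
            mul_le_mul_right (ENNReal.ofReal_le_ofReal (hs k hk)) ε
        _ = ENNReal.ofReal ((φ * t k) ^ (-s - (N : ℝ))) *
            (ε * ENNReal.ofReal (t k ^ ((N : ℝ) + D))) := by
            rw [ENNReal.ofReal_mul (Real.rpow_nonneg (mul_pos hφ0 (htpos k)).le _)]
            ring
    refine le_trans h1 ?_
    calc ENNReal.ofReal ((φ * t k) ^ (-s - (N : ℝ))) * (ε * ENNReal.ofReal (t k ^ ((N : ℝ) + D)))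
        ≤ ENNReal.ofReal ((φ * t k) ^ (-s - (N : ℝ))) * volume (A k) :=
          mul_le_mul_right (hvol k) _
      _ = ∫⁻ _ in A k, ENNReal.ofReal ((φ * t k) ^ (-s - (N : ℝ))) :=
          (setLIntegral_const _ _).symm
      _ ≤ ∫⁻ x in A k, ENNReal.ofReal (‖x‖ ^ (-s - (N : ℝ))) := by
          refine setLIntegral_mono' (hAmeas k) fun x hx => ?_
          refine ENNReal.ofReal_le_ofReal ?_
          have hx1 : t k ≤ ‖x‖ := hx.1.1
          have hx2 : ‖x‖ ≤ φ * t k := hx.1.2.le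
          exact Real.rpow_le_rpow_of_nonpos (lt_of_lt_of_le (htpos k) hx1) hx2 hexp
  calc (M : ℝ≥0∞) < K * δ := hMK
    _ = ∑ _k ∈ Finset.range K, δ := by simp [Finset.sum_const, mul_comm]
    _ ≤ ∑ k ∈ Finset.range K, ∫⁻ x in A k, ENNReal.ofReal (‖x‖ ^ (-s - (N : ℝ))) :=
        Finset.sum_le_sum hterm
    _ ≤ ∑' k, ∫⁻ x in A k, ENNReal.ofReal (‖x‖ ^ (-s - (N : ℝ))) := ENNReal.sum_le_tsum _
    _ = ∫⁻ x in ⋃ k, A k, ENNReal.ofReal (‖x‖ ^ (-s - (N : ℝ))) :=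
        (lintegral_iUnion hAmeas hAdisj _).symm
    _ ≤ ∫⁻ x in farBall N T ∩ Ω, ENNReal.ofReal (‖x‖ ^ (-s - (N : ℝ))) :=
        lintegral_mono_set hAsub
end
end

section
/- Let Ω ⊆ ℝ^N be Lebesgue measurable, φ > 1, and suppose D := dim_B^φ(∞,Ω) exists with D ∈ (-N, 0] and that the upper φ-shell Minkowski content C_T := sup_{t ≥ T} |B_{t,φt}(0) ∩ Ω| / t^{N+D} is finite for large T. Then for all real s > D, the bound (s - D) · (s+N) ∫_T^∞ t^{-s-N-1} |B_{T,t}(0) ∩ Ω| dt ≤ C_T T^{D-s} (φ^{N+D} - φ^{D-s})/(φ^{N+D} - 1) · (s-D)/(1 - φ^{D-s}) holds; consequently, limsup_{s→D⁺} (s - D) ζ_{∞,Ω}(s) ≤ C_T / log φ. -/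
open MeasureTheory Filter Set
open scoped ENNReal NNReal Topology

noncomputable section

lemma lint_rpow_Ico {c p q : ℝ} (hp : 0 < p) (hpq : p ≤ q) (hc : c ≠ -1) :
    ∫⁻ t in Ico p q, ENNReal.ofReal (t ^ c) =
      ENNReal.ofReal ((q ^ (c + 1) - p ^ (c + 1)) / (c + 1)) := by
  rw [setLIntegral_congr Ico_ae_eq_Ioc]
  have hq : 0 < q := lt_of_lt_of_le hp hpq
  have hcont : ContinuousOn (fun t : ℝ => t ^ c) (Icc p q) := fun x hx =>
    (Real.continuousAt_rpow_const x c (Or.inl (ne_of_gt (lt_of_lt_of_le hp hx.1)))).continuousWithinAt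
  have hint : IntegrableOn (fun t : ℝ => t ^ c) (Ioc p q) volume :=
    (hcont.integrableOn_compact isCompact_Icc).mono_set Ioc_subset_Icc_self
  have hnn : 0 ≤ᵐ[volume.restrict (Ioc p q)] fun t : ℝ => t ^ c := by
    refine (ae_restrict_iff' measurableSet_Ioc).mpr ?_
    exact Filter.Eventually.of_forall fun x hx => Real.rpow_nonneg (hp.le.trans hx.1.le) c
  rw [← ofReal_integral_eq_lintegral_ofReal hint hnn]
  congr 1
  rw [← intervalIntegral.integral_of_le hpq,
    integral_rpow (Or.inr ⟨hc, notMem_uIcc_of_lt hp hq⟩)]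


theorem residue_upper_bound_at_dim
    (N : ℕ) (Ω : Set (EuclideanSpace ℝ (Fin N))) (hΩ : MeasurableSet Ω)
    (T : ℝ) (hT : 0 < T) (φ : ℝ) (hφ : 1 < φ) (D : ℝ)
    (hDupper : upperShellDim N Ω φ = (D : EReal))
    (hDlower : lowerShellDim N Ω φ = (D : EReal))
    (hDN : -(N : ℝ) < D) (hD0 : D ≤ 0)
    (CT : ℝ) (hCT0 : 0 ≤ CT)
    (hCT : ∀ t : ℝ, T ≤ t →
      volume (shell N t (φ * t) ∩ Ω) ≤ ENNReal.ofReal (CT * t ^ ((N : ℝ) + D))) :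
    (∀ s : ℝ, D < s →
      ENNReal.ofReal (s - D) *
        (ENNReal.ofReal (s + N) *
          ∫⁻ t in Ioi T, ENNReal.ofReal (t ^ (-s - (N : ℝ) - 1)) * volume (shell N T t ∩ Ω)) ≤
      ENNReal.ofReal (CT * T ^ (D - s) * (φ ^ ((N : ℝ) + D) - φ ^ (D - s)) /
          (φ ^ ((N : ℝ) + D) - 1) * ((s - D) / (1 - φ ^ (D - s))))) ∧
    Filter.limsup (fun s : ℝ =>
        ENNReal.ofReal (s - D) *
          ∫⁻ x in farBall N T ∩ Ω, ENNReal.ofReal (‖x‖ ^ (-s - (N : ℝ))))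
      (nhdsWithin D (Ioi D)) ≤ ENNReal.ofReal (CT / Real.log φ) := by
  have hφ0 : (0 : ℝ) < φ := lt_trans one_pos hφ
  have hND : (0 : ℝ) < (N : ℝ) + D := by linarith
  set B : ℝ := φ ^ ((N : ℝ) + D) with hBdef
  have hB1 : 1 < B := (Real.one_lt_rpow_iff_of_pos hφ0).mpr (Or.inl ⟨hφ, hND⟩)
  have hB10 : (0 : ℝ) < B - 1 := by linarith
  set a : ℕ → ℝ := fun n => φ ^ n * T with hadef
  have hapos : ∀ n, 0 < a n := fun n => mul_pos (pow_pos hφ0 n) hT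
  have ha0 : a 0 = T := by simp [hadef]
  have hasucc : ∀ n, a (n + 1) = φ * a n := by
    intro n; simp only [hadef]; ring
  have hamono : StrictMono a := fun m n h => by
    simp only [hadef]
    exact mul_lt_mul_of_pos_right (pow_lt_pow_right₀ hφ h) hT
  have haT : ∀ n, T ≤ a n := fun n => ha0 ▸ hamono.monotone (Nat.zero_le n)
  have hax : ∀ (e : ℝ) (k : ℕ), a k ^ e = T ^ e * (φ ^ e) ^ k := by
    intro e k
    show (φ ^ k * T) ^ e = _
    rw [Real.mul_rpow (pow_nonneg hφ0.le _) hT.le, ← Real.rpow_natCast φ k,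
      ← Real.rpow_mul hφ0.le, mul_comm (k : ℝ) e, Real.rpow_mul hφ0.le, Real.rpow_natCast]
    ring
  have hex : ∀ x : ℝ, T ≤ x → ∃ n, a n ≤ x ∧ x < a (n + 1) := by
    intro x hx
    have hP : ∃ m, x < a (m + 1) := by
      have h1 : Tendsto a atTop atTop :=
        (tendsto_pow_atTop_atTop_of_one_lt hφ).atTop_mul_const hT
      obtain ⟨m, hm⟩ := (h1.eventually_gt_atTop x).exists
      exact ⟨m, lt_of_lt_of_le hm (hamono.monotone (Nat.le_succ m))⟩
    classical
    refine ⟨Nat.find hP, ?_, Nat.find_spec hP⟩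
    rcases Nat.eq_zero_or_pos (Nat.find hP) with h0 | hpos
    · rw [h0, ha0]; exact hx
    · obtain ⟨k, hk⟩ := Nat.exists_eq_succ_of_ne_zero hpos.ne'
      have hmin := Nat.find_min hP (m := k) (by omega)
      rw [hk]; exact not_lt.mp hmin
  have hvol : ∀ n, volume (shell N (a n) (a (n + 1)) ∩ Ω) ≤
      ENNReal.ofReal (CT * a n ^ ((N : ℝ) + D)) := by
    intro n
    rw [hasucc n]
    exact hCT (a n) (haT n)
  have hMn : ∀ n : ℕ, ∀ t ∈ Ico (a n) (a (n + 1)), volume (shell N T t ∩ Ω) ≤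
      ENNReal.ofReal (CT * T ^ ((N : ℝ) + D) * (B ^ (n + 1) / (B - 1))) := by
    intro n t ht
    have hsub : shell N T t ∩ Ω ⊆
        ⋃ k ∈ Finset.range (n + 1), shell N (a k) (a (k + 1)) ∩ Ω := by
      rintro x ⟨⟨hx1, hx2⟩, hxΩ⟩
      obtain ⟨k, hk1, hk2⟩ := hex ‖x‖ hx1
      have hkn : k < n + 1 := by
        by_contra hcon
        push_neg at hcon
        have h1 : a (n + 1) ≤ a k := hamono.monotone hcon
        have h2 : t ≤ ‖x‖ := le_trans (le_trans ht.2.le h1) hk1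
        linarith [hx2]
      exact Set.mem_biUnion (Finset.mem_range.mpr hkn) ⟨⟨hk1, hk2⟩, hxΩ⟩
    calc volume (shell N T t ∩ Ω)
        ≤ ∑ k ∈ Finset.range (n + 1), volume (shell N (a k) (a (k + 1)) ∩ Ω) :=
          (measure_mono hsub).trans (measure_biUnion_finset_le _ _)
      _ ≤ ∑ k ∈ Finset.range (n + 1), ENNReal.ofReal (CT * a k ^ ((N : ℝ) + D)) :=
          Finset.sum_le_sum fun k _ => hvol k
      _ = ENNReal.ofReal (∑ k ∈ Finset.range (n + 1), CT * a k ^ ((N : ℝ) + D)) :=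
          (ENNReal.ofReal_sum_of_nonneg fun k _ =>
            mul_nonneg hCT0 (Real.rpow_nonneg (hapos k).le _)).symm
      _ ≤ _ := by
          apply ENNReal.ofReal_le_ofReal
          have hsum : ∑ k ∈ Finset.range (n + 1), CT * a k ^ ((N : ℝ) + D)
              = CT * T ^ ((N : ℝ) + D) * ((B ^ (n + 1) - 1) / (B - 1)) := by
            have : ∀ k ∈ Finset.range (n + 1),
                CT * a k ^ ((N : ℝ) + D) = CT * T ^ ((N : ℝ) + D) * B ^ k := by
              intro k _; rw [hax ((N : ℝ) + D) k]; ring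
            rw [Finset.sum_congr rfl this, ← Finset.mul_sum, geom_sum_eq hB1.ne' (n + 1)]
          rw [hsum, div_eq_mul_inv, div_eq_mul_inv]
          have h1 : B ^ (n + 1) - 1 ≤ B ^ (n + 1) := by linarith
          exact mul_le_mul_of_nonneg_left
            (mul_le_mul_of_nonneg_right h1 (inv_nonneg.mpr hB10.le))
            (mul_nonneg hCT0 (Real.rpow_nonneg hT.le _))
  constructor
  · -- Part 1
    intro s hs
    have hu : (0:ℝ) < s + N := by linarith
    have hsD : (0:ℝ) < s - D := by linarith
    set r : ℝ := φ ^ (D - s) with hrdef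
    have hr0 : 0 < r := Real.rpow_pos_of_pos hφ0 _
    have hr1 : r < 1 := Real.rpow_lt_one_of_one_lt_of_neg hφ (by linarith)
    have hr10 : (0:ℝ) < 1 - r := by linarith
    set A : ℝ := φ ^ (-(s + (N:ℝ))) with hAdef
    have hA0 : 0 < A := Real.rpow_pos_of_pos hφ0 _
    have hA1 : A < 1 := Real.rpow_lt_one_of_one_lt_of_neg hφ (by linarith)
    have hAB : A * B = r := by
      rw [hAdef, hBdef, hrdef, ← Real.rpow_add hφ0]; congr 1; ring
    have h1AB : 1 - A * B ≠ 0 := by rw [hAB]; exact hr10.ne'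
    set c1 : ℝ := CT * T ^ (D - s) * ((1 - A) * B / (B - 1)) with hc1def
    have hc10 : 0 ≤ c1 := by
      apply mul_nonneg (mul_nonneg hCT0 (Real.rpow_nonneg hT.le _))
      exact div_nonneg (mul_nonneg (by linarith) (by linarith)) hB10.le
    have hT2 : T ^ (D - s) = T ^ (-(s + (N:ℝ))) * T ^ ((N:ℝ) + D) := by
      rw [← Real.rpow_add hT]; congr 1; ring
    have hpiece : ∀ n : ℕ,
        ENNReal.ofReal (s + N) * ∫⁻ t in Ico (a n) (a (n + 1)),
          ENNReal.ofReal (t ^ (-s - (N:ℝ) - 1)) * volume (shell N T t ∩ Ω)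
        ≤ ENNReal.ofReal (c1 * r ^ n) := by
      intro n
      have hmeas : Measurable fun t : ℝ =>
          ENNReal.ofReal (t ^ (-s - (N:ℝ) - 1)) := (measurable_id.pow_const _).ennreal_ofReal
      have hstep : ∫⁻ t in Ico (a n) (a (n + 1)),
            ENNReal.ofReal (t ^ (-s - (N:ℝ) - 1)) * volume (shell N T t ∩ Ω)
          ≤ (∫⁻ t in Ico (a n) (a (n + 1)), ENNReal.ofReal (t ^ (-s - (N:ℝ) - 1))) *
            ENNReal.ofReal (CT * T ^ ((N:ℝ) + D) * (B ^ (n + 1) / (B - 1))) := by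
        rw [← lintegral_mul_const _ hmeas]
        refine setLIntegral_mono (hmeas.mul_const _) fun t ht => ?_
        exact mul_le_mul_right (hMn n t ht) _
      have hI : ∫⁻ t in Ico (a n) (a (n + 1)), ENNReal.ofReal (t ^ (-s - (N:ℝ) - 1))
          = ENNReal.ofReal ((a n ^ (-(s + (N:ℝ))) - a (n + 1) ^ (-(s + (N:ℝ)))) / (s + N)) := by
        rw [lint_rpow_Ico (hapos n) (hamono (Nat.lt_succ_self n)).le
          (ne_of_lt (by linarith : -s - (N:ℝ) - 1 < -1))]
        have he : -s - (N:ℝ) - 1 + 1 = -(s + (N:ℝ)) := by ring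
        rw [he, hax (-(s + (N:ℝ))) n, hax (-(s + (N:ℝ))) (n + 1), div_neg, ← neg_div, neg_sub]
      have hXnn : 0 ≤ (a n ^ (-(s + (N:ℝ))) - a (n + 1) ^ (-(s + (N:ℝ)))) / (s + N) := by
        apply div_nonneg _ hu.le
        have := Real.rpow_le_rpow_of_nonpos (hapos n) (hamono (Nat.lt_succ_self n)).le
          (by linarith : -(s + (N:ℝ)) ≤ 0)
        linarith
      have hMnn : 0 ≤ CT * T ^ ((N:ℝ) + D) * (B ^ (n + 1) / (B - 1)) := by
        apply mul_nonneg (mul_nonneg hCT0 (Real.rpow_nonneg hT.le _))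
        exact div_nonneg (pow_nonneg (by linarith) _) hB10.le
      calc ENNReal.ofReal (s + N) * ∫⁻ t in Ico (a n) (a (n + 1)),
            ENNReal.ofReal (t ^ (-s - (N:ℝ) - 1)) * volume (shell N T t ∩ Ω)
          ≤ ENNReal.ofReal (s + N) *
            ((∫⁻ t in Ico (a n) (a (n + 1)), ENNReal.ofReal (t ^ (-s - (N:ℝ) - 1))) *
              ENNReal.ofReal (CT * T ^ ((N:ℝ) + D) * (B ^ (n + 1) / (B - 1)))) :=
            mul_le_mul_right hstep _
        _ = ENNReal.ofReal (c1 * r ^ n) := by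
            rw [hI, ← ENNReal.ofReal_mul hXnn, ← ENNReal.ofReal_mul hu.le]
            congr 1
            rw [hax (-(s + (N:ℝ))) n, hax (-(s + (N:ℝ))) (n + 1), ← hAdef, hc1def, ← hAB, hT2]
            field_simp
            ring
    have hsummable : Summable fun n : ℕ => c1 * r ^ n :=
      (summable_geometric_of_lt_one hr0.le hr1).mul_left _
    have htsum : ∑' n : ℕ, ENNReal.ofReal (c1 * r ^ n) = ENNReal.ofReal (c1 * (1 - r)⁻¹) := by
      rw [← ENNReal.ofReal_tsum_of_nonneg (fun n => mul_nonneg hc10 (pow_nonneg hr0.le n))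
        hsummable, tsum_mul_left, tsum_geometric_of_lt_one hr0.le hr1]
    calc ENNReal.ofReal (s - D) * (ENNReal.ofReal (s + N) * ∫⁻ t in Ioi T,
            ENNReal.ofReal (t ^ (-s - (N:ℝ) - 1)) * volume (shell N T t ∩ Ω))
        ≤ ENNReal.ofReal (s - D) * (ENNReal.ofReal (s + N) * ∑' n : ℕ,
            ∫⁻ t in Ico (a n) (a (n + 1)),
              ENNReal.ofReal (t ^ (-s - (N:ℝ) - 1)) * volume (shell N T t ∩ Ω)) := by
          refine mul_le_mul_right (mul_le_mul_right ?_ _) _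
          refine le_trans (lintegral_mono_set ?_) (lintegral_iUnion_le _ _)
          intro t ht
          obtain ⟨n, h1, h2⟩ := hex t (le_of_lt ht)
          exact mem_iUnion.mpr ⟨n, h1, h2⟩
      _ = ENNReal.ofReal (s - D) * ∑' n : ℕ, ENNReal.ofReal (s + N) *
            ∫⁻ t in Ico (a n) (a (n + 1)),
              ENNReal.ofReal (t ^ (-s - (N:ℝ) - 1)) * volume (shell N T t ∩ Ω) := by
          rw [ENNReal.tsum_mul_left]
      _ ≤ ENNReal.ofReal (s - D) * ∑' n : ℕ, ENNReal.ofReal (c1 * r ^ n) :=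
          mul_le_mul_right (ENNReal.tsum_le_tsum hpiece) _
      _ = ENNReal.ofReal (s - D) * ENNReal.ofReal (c1 * (1 - r)⁻¹) := by rw [htsum]
      _ ≤ _ := by
          rw [← ENNReal.ofReal_mul hsD.le]
          apply ENNReal.ofReal_le_ofReal
          apply le_of_eq
          rw [hc1def, ← hAB]
          field_simp
  · -- Part 2
    have hζ : ∀ s : ℝ, D < s →
        ENNReal.ofReal (s - D) *
          ∫⁻ x in farBall N T ∩ Ω, ENNReal.ofReal (‖x‖ ^ (-s - (N:ℝ)))
        ≤ ENNReal.ofReal (CT * T ^ (D - s) * ((s - D) / (1 - φ ^ (D - s)))) := by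
      intro s hs
      have hu : (0:ℝ) < s + N := by linarith
      have hsD : (0:ℝ) < s - D := by linarith
      set r : ℝ := φ ^ (D - s) with hrdef
      have hr0 : 0 < r := Real.rpow_pos_of_pos hφ0 _
      have hr1 : r < 1 := Real.rpow_lt_one_of_one_lt_of_neg hφ (by linarith)
      have hr10 : (0:ℝ) < 1 - r := by linarith
      have hc0 : 0 ≤ CT * T ^ (D - s) := mul_nonneg hCT0 (Real.rpow_nonneg hT.le _)
      have hsub : farBall N T ∩ Ω ⊆ ⋃ n : ℕ, shell N (a n) (a (n + 1)) ∩ Ω := by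
        rintro x ⟨hx, hxΩ⟩
        obtain ⟨n, h1, h2⟩ := hex ‖x‖ hx
        exact mem_iUnion.mpr ⟨n, ⟨h1, h2⟩, hxΩ⟩
      have hshellmeas : ∀ n : ℕ, MeasurableSet (shell N (a n) (a (n + 1)) ∩ Ω) := by
        intro n
        exact ((measurable_norm (measurableSet_Ico (a := a n) (b := a (n + 1)))).inter hΩ)
      have hpershell : ∀ n : ℕ,
          ∫⁻ x in shell N (a n) (a (n + 1)) ∩ Ω, ENNReal.ofReal (‖x‖ ^ (-s - (N:ℝ)))
          ≤ ENNReal.ofReal (CT * T ^ (D - s) * r ^ n) := by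
        intro n
        calc ∫⁻ x in shell N (a n) (a (n + 1)) ∩ Ω, ENNReal.ofReal (‖x‖ ^ (-s - (N:ℝ)))
            ≤ ∫⁻ _ in shell N (a n) (a (n + 1)) ∩ Ω, ENNReal.ofReal (a n ^ (-s - (N:ℝ))) := by
              refine setLIntegral_mono measurable_const fun x hx => ?_
              exact ENNReal.ofReal_le_ofReal
                (Real.rpow_le_rpow_of_nonpos (hapos n) hx.1.1 (by linarith))
          _ = ENNReal.ofReal (a n ^ (-s - (N:ℝ))) * volume (shell N (a n) (a (n + 1)) ∩ Ω) :=
              setLIntegral_const _ _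
          _ ≤ ENNReal.ofReal (a n ^ (-s - (N:ℝ))) * ENNReal.ofReal (CT * a n ^ ((N:ℝ) + D)) :=
              mul_le_mul_right (hvol n) _
          _ = ENNReal.ofReal (CT * T ^ (D - s) * r ^ n) := by
              rw [← ENNReal.ofReal_mul (Real.rpow_nonneg (hapos n).le _)]
              congr 1
              rw [hax (-s - (N:ℝ)) n, hax ((N:ℝ) + D) n]
              have h1 : T ^ (-s - (N:ℝ)) * T ^ ((N:ℝ) + D) = T ^ (D - s) := by
                rw [← Real.rpow_add hT]; congr 1; ring
              have h2 : φ ^ (-s - (N:ℝ)) * φ ^ ((N:ℝ) + D) = r := by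
                rw [hrdef, ← Real.rpow_add hφ0]; congr 1; ring
              rw [← h1, ← h2, mul_pow]
              ring
      have hsummable : Summable fun n : ℕ => CT * T ^ (D - s) * r ^ n :=
        (summable_geometric_of_lt_one hr0.le hr1).mul_left _
      calc ENNReal.ofReal (s - D) *
            ∫⁻ x in farBall N T ∩ Ω, ENNReal.ofReal (‖x‖ ^ (-s - (N:ℝ)))
          ≤ ENNReal.ofReal (s - D) * ∑' n : ℕ,
              ∫⁻ x in shell N (a n) (a (n + 1)) ∩ Ω, ENNReal.ofReal (‖x‖ ^ (-s - (N:ℝ))) :=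
            mul_le_mul_right ((lintegral_mono_set hsub).trans (lintegral_iUnion_le _ _)) _
        _ ≤ ENNReal.ofReal (s - D) * ∑' n : ℕ, ENNReal.ofReal (CT * T ^ (D - s) * r ^ n) :=
            mul_le_mul_right (ENNReal.tsum_le_tsum hpershell) _
        _ = ENNReal.ofReal (s - D) * ENNReal.ofReal (CT * T ^ (D - s) * (1 - r)⁻¹) := by
            rw [← ENNReal.ofReal_tsum_of_nonneg
              (fun n => mul_nonneg hc0 (pow_nonneg hr0.le n)) hsummable,
              tsum_mul_left, tsum_geometric_of_lt_one hr0.le hr1]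
        _ ≤ _ := by
            rw [← ENNReal.ofReal_mul hsD.le]
            apply ENNReal.ofReal_le_ofReal
            apply le_of_eq
            field_simp
    have hL : 0 < Real.log φ := Real.log_pos hφ
    have h1 : Tendsto (fun s : ℝ => T ^ (D - s)) (𝓝[>] D) (𝓝 1) := by
      have heq : (fun s : ℝ => T ^ (D - s)) = fun s => Real.exp (Real.log T * (D - s)) := by
        funext s; exact Real.rpow_def_of_pos hT _
      rw [heq]
      have hc : Continuous fun s : ℝ => Real.exp (Real.log T * (D - s)) :=
        Real.continuous_exp.comp (continuous_const.mul (continuous_const.sub continuous_id))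
      have := hc.tendsto D
      simp only [sub_self, mul_zero, Real.exp_zero] at this
      exact this.mono_left nhdsWithin_le_nhds
    have h2 : Tendsto (fun s : ℝ => (s - D) / (1 - φ ^ (D - s))) (𝓝[>] D)
        (𝓝 (Real.log φ)⁻¹) := by
      have hψ : HasDerivAt (fun x : ℝ => 1 - Real.exp (Real.log φ * (D - x)))
          (Real.log φ) D := by
        have h0 : HasDerivAt (fun x : ℝ => Real.log φ * (D - x)) (-Real.log φ) D := by
          simpa using ((hasDerivAt_id D).const_sub D).const_mul (Real.log φ)
        have := (h0.exp).const_sub 1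
        simpa using this
      have hslope := hasDerivAt_iff_tendsto_slope.mp hψ
      have hslope' : Tendsto (fun s : ℝ =>
          (1 - Real.exp (Real.log φ * (D - s))) / (s - D)) (𝓝[≠] D) (𝓝 (Real.log φ)) := by
        have : (slope (fun x : ℝ => 1 - Real.exp (Real.log φ * (D - x))) D) =
            fun s : ℝ => (1 - Real.exp (Real.log φ * (D - s))) / (s - D) := by
          funext s
          rw [slope_def_field]
          simp [sub_self]
        rwa [this] at hslope
      have hinv := hslope'.inv₀ hL.ne'
      have hmono : 𝓝[>] D ≤ 𝓝[≠] D :=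
        nhdsWithin_mono D fun x hx => ne_of_gt hx
      refine Tendsto.congr (fun s => ?_) (hinv.mono_left hmono)
      rw [inv_div, Real.rpow_def_of_pos hφ0]
    have hreal : Tendsto (fun s : ℝ => CT * T ^ (D - s) * ((s - D) / (1 - φ ^ (D - s))))
        (𝓝[>] D) (𝓝 (CT / Real.log φ)) := by
      have := (tendsto_const_nhds (x := CT) (f := 𝓝[>] D)).mul h1 |>.mul h2
      simpa [mul_one, div_eq_mul_inv] using this
    have hG : Tendsto (fun s : ℝ =>
        ENNReal.ofReal (CT * T ^ (D - s) * ((s - D) / (1 - φ ^ (D - s)))))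
        (𝓝[>] D) (𝓝 (ENNReal.ofReal (CT / Real.log φ))) :=
      ENNReal.tendsto_ofReal hreal
    calc Filter.limsup (fun s : ℝ =>
          ENNReal.ofReal (s - D) *
            ∫⁻ x in farBall N T ∩ Ω, ENNReal.ofReal (‖x‖ ^ (-s - (N:ℝ)))) (𝓝[>] D)
        ≤ Filter.limsup (fun s : ℝ =>
            ENNReal.ofReal (CT * T ^ (D - s) * ((s - D) / (1 - φ ^ (D - s))))) (𝓝[>] D) := by
          refine Filter.limsup_le_limsup ?_
          filter_upwards [self_mem_nhdsWithin] with s hs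
          exact hζ s hs
      _ = ENNReal.ofReal (CT / Real.log φ) := hG.limsup_eq
end
end
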